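/- arXiv:1201.1944 — 7 statements merged into one kernel-verified Lean document; each statement's English description precedes it below -/
import Mathlib

section
/- Let K be an algebraically closed field and f : 𝔸² → 𝔸² a dominant polynomial map with f(0,0) = (0,0). Let v be a normalized semivaluation on R = K[z₁,z₂] centered at the origin and suppose: (1) there is a constant C > 0 such that ord₀(φ) ≤ v(φ) ≤ C·ord₀(φ) for all φ ∈ R (an Izumi-type bound), and (2) there is a real number c > 0 such that v(f*φ) = c·v(φ) for all φ ∈ R. Then C⁻¹·cⁿ ≤ c(fⁿ) ≤ cⁿ for all n ≥ 1; in particular c_∞(f) = c. -/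
open Filter
open scoped ENNReal

/-- The maximal ideal `𝔪₀ = (z₁, z₂)` at the origin of `𝔸²`, inside `R = K[z₁,z₂]`. -/
noncomputable def maxIdealAtOrigin (K : Type*) [Field K] :
    Ideal (MvPolynomial (Fin 2) K) :=
  Ideal.span {MvPolynomial.X 0, MvPolynomial.X 1}

/-- `ord₀(φ) = max {k ≥ 0 : φ ∈ 𝔪₀ᵏ}`, with `ord₀(0) = +∞`. -/
noncomputable def ord0 {K : Type*} [Field K] (φ : MvPolynomial (Fin 2) K) : ℕ∞ :=
  ⨆ k ∈ {k : ℕ | φ ∈ (maxIdealAtOrigin K) ^ k}, (k : ℕ∞)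

/-- `c(fⁿ) = min(ord₀((fⁿ)₁), ord₀((fⁿ)₂))`, where the polynomial map `f : 𝔸² → 𝔸²`
is encoded by its pullback `σ = f*`. -/
noncomputable def cSeq {K : Type*} [Field K]
    (σ : MvPolynomial (Fin 2) K →ₐ[K] MvPolynomial (Fin 2) K) (n : ℕ) : ℕ :=
  min ((ord0 ((⇑σ)^[n] (MvPolynomial.X 0))).toNat)
      ((ord0 ((⇑σ)^[n] (MvPolynomial.X 1))).toNat)

/-- A normalized semivaluation on `R = K[z₁,z₂]` centered at the origin: a function
`v : R → [0,+∞]` with `v(φψ) = v(φ)+v(ψ)`, `v(φ+ψ) ≥ min(v(φ),v(ψ))`, `v ≡ 0` on `K^×`,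
`v(0) = +∞` and `min(v(z₁), v(z₂)) = 1`. -/
def IsSemivalAtOrigin {K : Type*} [Field K] (v : MvPolynomial (Fin 2) K → ℝ≥0∞) : Prop :=
  (∀ φ ψ, v (φ * ψ) = v φ + v ψ) ∧
  (∀ φ ψ, min (v φ) (v ψ) ≤ v (φ + ψ)) ∧
  (∀ c : K, c ≠ 0 → v (MvPolynomial.C c) = 0) ∧
  v 0 = ⊤ ∧
  min (v (MvPolynomial.X 0)) (v (MvPolynomial.X 1)) = 1

/-!
Since `min(v(z₁), v(z₂)) = 1`, the eigenvaluation identity `v((fⁿ)*zᵢ) = cⁿ·v(zᵢ)` gives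
`v((fⁿ)*zᵢ) ≥ cⁿ` for both coordinates, with equality for one of them. The Izumi bound
`ord₀ ≤ v ≤ C·ord₀` turns this into `C⁻¹cⁿ ≤ ord₀((fⁿ)*zᵢ)` for both `i` and `ord₀((fⁿ)*zᵢ) ≤ cⁿ`
for one `i`, which pinches `c(fⁿ)` between `C⁻¹cⁿ` and `cⁿ`; as `C^(-1/n) → 1`, `c(fⁿ)^(1/n) → c`.
-/

open MvPolynomial Topology

theorem maxIdealAtOrigin_ne_top (K : Type*) [Field K] : maxIdealAtOrigin K ≠ ⊤ := by
  refine ne_top_of_le_ne_top (RingHom.ker_ne_top (constantCoeff (R := K) (σ := Fin 2))) ?_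
  rw [maxIdealAtOrigin, Ideal.span_le]
  rintro _ (rfl | rfl) <;> simp

theorem ord0_ne_top {K : Type*} [Field K] {φ : MvPolynomial (Fin 2) K} (hφ : φ ≠ 0) :
    ord0 φ ≠ ⊤ := by
  intro h
  have hmem : ∀ k : ℕ, φ ∈ maxIdealAtOrigin K ^ k := by
    intro k
    have hk : (k : ℕ∞) < ord0 φ := h ▸ ENat.natCast_lt_top k
    simp only [ord0, lt_iSup_iff] at hk
    obtain ⟨k', hk', hlt⟩ := hk
    exact Ideal.pow_le_pow_right (by exact_mod_cast hlt.le) hk'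
  refine hφ (Ideal.mem_bot.mp ?_)
  rw [← Ideal.iInf_pow_eq_bot_of_isDomain _ (maxIdealAtOrigin_ne_top K)]
  exact Ideal.mem_iInf.mpr hmem

theorem natCast_toNat_ord0 {K : Type*} [Field K] {φ : MvPolynomial (Fin 2) K} (hφ : φ ≠ 0) :
    (((ord0 φ).toNat : ℕ) : ℝ≥0∞) = ord0 φ := by
  rw [← ENat.toENNReal_coe, ENat.natCast_toNat (ord0_ne_top hφ)]

namespace IsSemivalAtOrigin

variable {K : Type*} [Field K] {v : MvPolynomial (Fin 2) K → ℝ≥0∞}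

theorem one_le_apply_X (hv : IsSemivalAtOrigin v) (i : Fin 2) : 1 ≤ v (X i) := by
  rw [← hv.2.2.2.2]
  fin_cases i
  exacts [min_le_left _ _, min_le_right _ _]

theorem exists_apply_X_eq_one (hv : IsSemivalAtOrigin v) : ∃ i : Fin 2, v (X i) = 1 := by
  rcases min_choice (v (X 0)) (v (X 1)) with h | h
  exacts [⟨0, h ▸ hv.2.2.2.2⟩, ⟨1, h ▸ hv.2.2.2.2⟩]

end IsSemivalAtOrigin

theorem apply_iterate_of_apply_eq_mul {α M : Type*} [Monoid M] {f : α → α} {v : α → M} {a : M}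
    (h : ∀ x, v (f x) = a * v x) (n : ℕ) (x : α) : v (f^[n] x) = a ^ n * v x := by
  rw [Function.Semiconj.iterate_right h n x, mul_left_iterate]

section Eigenvaluation

variable {K : Type*} [Field K] {σ : MvPolynomial (Fin 2) K →ₐ[K] MvPolynomial (Fin 2) K}
  {v : MvPolynomial (Fin 2) K → ℝ≥0∞} {C c : ℝ}

theorem pow_le_mul_toNat_ord0_iterate (hdom : Function.Injective σ) (hv : IsSemivalAtOrigin v)
    (hC : 0 ≤ C) (hIzumi : ∀ φ, v φ ≤ ENNReal.ofReal C * (ord0 φ : ℝ≥0∞)) (hc : 0 ≤ c)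
    (heigen : ∀ φ, v (σ φ) = ENNReal.ofReal c * v φ) (n : ℕ) (i : Fin 2) :
    c ^ n ≤ C * (ord0 ((⇑σ)^[n] (X i))).toNat := by
  have hne : (⇑σ)^[n] (X i) ≠ 0 := fun h =>
    X_ne_zero i ((hdom.iterate n) (h.trans (Function.iterate_fixed (map_zero σ) n).symm))
  rw [← ENNReal.ofReal_le_ofReal_iff (by positivity), ENNReal.ofReal_mul hC,
    ENNReal.ofReal_natCast, natCast_toNat_ord0 hne, ENNReal.ofReal_pow hc]
  calc ENNReal.ofReal c ^ n ≤ ENNReal.ofReal c ^ n * v (X i) :=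
        le_mul_of_one_le_right' (hv.one_le_apply_X i)
    _ = v ((⇑σ)^[n] (X i)) := (apply_iterate_of_apply_eq_mul heigen n _).symm
    _ ≤ _ := hIzumi _

theorem toNat_ord0_iterate_le_pow (hIzumi : ∀ φ, (ord0 φ : ℝ≥0∞) ≤ v φ) (hc : 0 ≤ c)
    (heigen : ∀ φ, v (σ φ) = ENNReal.ofReal c * v φ) {i : Fin 2} (hi : v (X i) = 1) (n : ℕ) :
    ((ord0 ((⇑σ)^[n] (X i))).toNat : ℝ) ≤ c ^ n := by
  rw [← ENNReal.ofReal_le_ofReal_iff (by positivity), ENNReal.ofReal_natCast,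
    ENNReal.ofReal_pow hc, ← ENat.toENNReal_coe]
  calc _ ≤ (ord0 ((⇑σ)^[n] (X i)) : ℝ≥0∞) := ENat.toENNReal_le.mpr (ENat.natCast_toNat_le_self _)
    _ ≤ v ((⇑σ)^[n] (X i)) := hIzumi _
    _ = ENNReal.ofReal c ^ n := by rw [apply_iterate_of_apply_eq_mul heigen, hi, mul_one]

end Eigenvaluation

theorem tendsto_const_rpow_inv_natCast {A : ℝ} (hA : 0 < A) :
    Tendsto (fun n : ℕ => A ^ (n : ℝ)⁻¹) atTop (𝓝 1) := by
  have h := ((Real.continuousAt_const_rpow hA.ne').tendsto).comp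
    (tendsto_inv_atTop_zero.comp tendsto_natCast_atTop_atTop)
  simpa only [Real.rpow_zero, Function.comp_def] using h

theorem tendsto_rpow_inv_of_mul_pow_le_of_le_pow {u : ℕ → ℝ} {A c : ℝ} (hA : 0 < A) (hc : 0 ≤ c)
    (hlow : ∀ n, A * c ^ n ≤ u n) (hup : ∀ n, u n ≤ c ^ n) :
    Tendsto (fun n : ℕ => u n ^ (n : ℝ)⁻¹) atTop (𝓝 c) := by
  have hlim : Tendsto (fun n : ℕ => A ^ (n : ℝ)⁻¹ * c) atTop (𝓝 c) := by
    simpa using (tendsto_const_rpow_inv_natCast hA).mul_const c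
  refine tendsto_of_tendsto_of_tendsto_of_le_of_le' hlim tendsto_const_nhds ?_ ?_ <;>
    filter_upwards [eventually_ne_atTop 0] with n hn
  · calc A ^ (n : ℝ)⁻¹ * c = (A * c ^ n) ^ (n : ℝ)⁻¹ := by
          rw [Real.mul_rpow hA.le (by positivity), Real.pow_rpow_inv_natCast hc hn]
      _ ≤ u n ^ (n : ℝ)⁻¹ := Real.rpow_le_rpow (by positivity) (hlow n) (by positivity)
  · calc u n ^ (n : ℝ)⁻¹ ≤ (c ^ n) ^ (n : ℝ)⁻¹ :=
          Real.rpow_le_rpow ((by positivity : 0 ≤ A * c ^ n).trans (hlow n)) (hup n) (by positivity)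
      _ = c := Real.pow_rpow_inv_natCast hc hn

theorem bounds_from_eigenvaluation_general {K : Type*} [Field K]
    (σ : MvPolynomial (Fin 2) K →ₐ[K] MvPolynomial (Fin 2) K)
    (hdom : Function.Injective σ)
    (v : MvPolynomial (Fin 2) K → ℝ≥0∞) (hv : IsSemivalAtOrigin v)
    (C : ℝ) (hC : 0 < C)
    (hIzumi : ∀ φ : MvPolynomial (Fin 2) K,
      (ord0 φ : ℝ≥0∞) ≤ v φ ∧ v φ ≤ ENNReal.ofReal C * (ord0 φ : ℝ≥0∞))
    (c : ℝ) (hc : 0 < c)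
    (heigen : ∀ φ : MvPolynomial (Fin 2) K, v (σ φ) = ENNReal.ofReal c * v φ) :
    (∀ n : ℕ, 1 ≤ n → C⁻¹ * c ^ n ≤ (cSeq σ n : ℝ) ∧ (cSeq σ n : ℝ) ≤ c ^ n) ∧
    Tendsto (fun n : ℕ => (cSeq σ n : ℝ) ^ (n : ℝ)⁻¹) atTop (nhds c) := by
  have hlow (n : ℕ) : C⁻¹ * c ^ n ≤ (cSeq σ n : ℝ) := by
    have (i : Fin 2) := pow_le_mul_toNat_ord0_iterate hdom hv hC.le (fun φ => (hIzumi φ).2) hc.le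
      heigen n i
    rw [cSeq, Nat.cast_min]
    exact le_min ((inv_mul_le_iff₀ hC).2 (this 0)) ((inv_mul_le_iff₀ hC).2 (this 1))
  have hup (n : ℕ) : (cSeq σ n : ℝ) ≤ c ^ n := by
    obtain ⟨i, hi⟩ := hv.exists_apply_X_eq_one
    have := toNat_ord0_iterate_le_pow (fun φ => (hIzumi φ).1) hc.le heigen hi n
    rw [cSeq, Nat.cast_min]
    fin_cases i
    exacts [min_le_of_left_le this, min_le_of_right_le this]
  exact ⟨fun n _ => ⟨hlow n, hup n⟩,
    tendsto_rpow_inv_of_mul_pow_le_of_le_pow (inv_pos.2 hC) hc.le hlow hup⟩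

/-- If a normalized semivaluation `v` centered at the origin satisfies an Izumi-type bound
`ord₀ ≤ v ≤ C·ord₀` and is an eigenvaluation, `v ∘ f* = c·v` with `c > 0`, then
`C⁻¹·cⁿ ≤ c(fⁿ) ≤ cⁿ` for all `n ≥ 1`; in particular `c_∞(f) = c`. -/
theorem bounds_from_eigenvaluation {K : Type*} [Field K] [IsAlgClosed K]
    (σ : MvPolynomial (Fin 2) K →ₐ[K] MvPolynomial (Fin 2) K)
    (hdom : Function.Injective σ)
    (hfix0 : MvPolynomial.eval (0 : Fin 2 → K) (σ (MvPolynomial.X 0)) = 0)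
    (hfix1 : MvPolynomial.eval (0 : Fin 2 → K) (σ (MvPolynomial.X 1)) = 0)
    (v : MvPolynomial (Fin 2) K → ℝ≥0∞) (hv : IsSemivalAtOrigin v)
    (C : ℝ) (hC : 0 < C)
    (hIzumi : ∀ φ : MvPolynomial (Fin 2) K,
      (ord0 φ : ℝ≥0∞) ≤ v φ ∧ v φ ≤ ENNReal.ofReal C * (ord0 φ : ℝ≥0∞))
    (c : ℝ) (hc : 0 < c)
    (heigen : ∀ φ : MvPolynomial (Fin 2) K, v (σ φ) = ENNReal.ofReal c * v φ) :
    (∀ n : ℕ, 1 ≤ n → C⁻¹ * c ^ n ≤ (cSeq σ n : ℝ) ∧ (cSeq σ n : ℝ) ≤ c ^ n) ∧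
    Tendsto (fun n : ℕ => (cSeq σ n : ℝ) ^ (n : ℝ)⁻¹) atTop (nhds c) :=
  bounds_from_eigenvaluation_general σ hdom v hv C hC hIzumi c hc heigen
end

section
/- Every tree is compact in its weak topology. -/
universe u

/-- The data of a tree: for each pair of points `x, y`, a segment `seg x y ⊆ X`
together with a relation `le x y`, interpreted as the partial order of the interval
structure on `seg x y`. -/
structure TreeData (X : Type u) where
  seg : X → X → Set X
  le : X → X → X → X → Prop

namespace TreeData

variable {X : Type u} (T : TreeData X)

/-- The axioms (T1)–(T5) making the data `T` a tree: each segment `[x,y]` contains `x`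
and `y` and carries an interval structure (a partial order under which it is
order-isomorphic to the real interval `[0,1]` or to the trivial interval `{0}`),
subject to the conditions (T1)–(T5). -/
structure IsTree : Prop where
  mem_left : ∀ x y : X, x ∈ T.seg x y
  mem_right : ∀ x y : X, y ∈ T.seg x y
  /-- Interval structure: on `seg x y` the relation `T.le x y` is pulled back from the
  usual order of `[0,1] ⊆ ℝ` (or of the trivial interval `{0}`) by some bijection. -/
  interval : ∀ x y : X, ∃ f : X → ℝ,
    (Set.BijOn f (T.seg x y) (Set.Icc (0 : ℝ) 1) ∨ Set.BijOn f (T.seg x y) {(0 : ℝ)}) ∧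
    ∀ a ∈ T.seg x y, ∀ b ∈ T.seg x y, (T.le x y a b ↔ f a ≤ f b)
  /-- (T1) -/
  t1 : ∀ x : X, T.seg x x = {x}
  /-- (T2): for `x ≠ y`, `[x,y]` and `[y,x]` coincide as sets, carry opposite interval
  structures, and have `x` resp. `y` as minimal elements. -/
  t2 : ∀ x y : X, x ≠ y →
    T.seg x y = T.seg y x ∧
    (∀ a ∈ T.seg x y, ∀ b ∈ T.seg x y, (T.le x y a b ↔ T.le y x b a)) ∧
    (∀ a ∈ T.seg x y, T.le x y x a) ∧
    (∀ a ∈ T.seg y x, T.le y x y a)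
  /-- (T3): if `z ∈ [x,y]` then `[x,z]` and `[z,y]` are subintervals of `[x,y]` with
  `[x,y] = [x,z] ∪ [z,y]` and `[x,z] ∩ [z,y] = {z}`. -/
  t3 : ∀ x y z : X, z ∈ T.seg x y →
    T.seg x z ⊆ T.seg x y ∧ T.seg z y ⊆ T.seg x y ∧
    (∀ a ∈ T.seg x z, ∀ b ∈ T.seg x z, (T.le x z a b ↔ T.le x y a b)) ∧
    (∀ a ∈ T.seg z y, ∀ b ∈ T.seg z y, (T.le z y a b ↔ T.le x y a b)) ∧
    T.seg x y = T.seg x z ∪ T.seg z y ∧ T.seg x z ∩ T.seg z y = {z}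
  /-- (T4): existence and uniqueness of the point `x ∧_z y`. -/
  t4 : ∀ x y z : X, ∃! w : X, w ∈ T.seg x y ∧
    T.seg z x ∩ T.seg y x = T.seg w x ∧ T.seg z y ∩ T.seg x y = T.seg w y
  /-- (T5): for a net `(y_α)` with increasing segments `[x, y_α]`, there is `y` with
  `⋃_α [x, y_α⟩ = [x, y⟩`. -/
  t5 : ∀ (A : Type u) (r : A → A → Prop), Nonempty A → IsDirected A r →
    ∀ (x : X) (y : A → X), (∀ a b : A, r a b → T.seg x (y a) ⊆ T.seg x (y b)) →
    ∃ w : X, (⋃ a : A, (T.seg x (y a) \ {y a})) = T.seg x w \ {w}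

/-- The set `U(𝐯)` of points of `X ∖ {x}` representing the same tangent direction at `x`
as `y` does: points `w ≠ x` with `⟨x,y] ∩ ⟨x,w] ≠ ∅`. -/
def tangentSet (x y : X) : Set X :=
  {w : X | w ≠ x ∧ ((T.seg x y \ {x}) ∩ (T.seg x w \ {x})).Nonempty}

/-- The weak topology of the tree: generated by the sets `U(𝐯)` over all tangent
directions `𝐯` at all points. -/
def weakTopology : TopologicalSpace X :=
  TopologicalSpace.generateFrom
    {U : Set X | ∃ x y : X, y ≠ x ∧ U = T.tangentSet x y}

end TreeData


namespace TreeData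

variable {X : Type u} {T : TreeData X}

/-- `y` and `w` lie in the same tangent direction at `x`. -/
def equivAt (T : TreeData X) (x y w : X) : Prop :=
  ((T.seg x y \ {x}) ∩ (T.seg x w \ {x})).Nonempty

lemma mem_tangentSet {x y w : X} : w ∈ T.tangentSet x y ↔ w ≠ x ∧ T.equivAt x y w :=
  Iff.rfl

lemma equivAt_symm {x y w : X} (h : T.equivAt x y w) : T.equivAt x w y := by
  obtain ⟨p, hp1, hp2⟩ := h; exact ⟨p, hp2, hp1⟩

namespace IsTree

variable (hT : T.IsTree)
include hT

lemma seg_symm (x y : X) : T.seg x y = T.seg y x := by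
  by_cases h : x = y
  · subst h; rfl
  · exact (hT.t2 x y h).1

lemma seg_sub_left {x y z : X} (h : z ∈ T.seg x y) : T.seg x z ⊆ T.seg x y :=
  (hT.t3 x y z h).1

lemma seg_sub_right {x y z : X} (h : z ∈ T.seg x y) : T.seg z y ⊆ T.seg x y :=
  (hT.t3 x y z h).2.1

lemma seg_union {x y z : X} (h : z ∈ T.seg x y) : T.seg x y = T.seg x z ∪ T.seg z y :=
  (hT.t3 x y z h).2.2.2.2.1

lemma seg_inter {x y z : X} (h : z ∈ T.seg x y) : T.seg x z ∩ T.seg z y = {z} :=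
  (hT.t3 x y z h).2.2.2.2.2

lemma seg_antisymm {x y z : X} (h1 : y ∈ T.seg x z) (h2 : z ∈ T.seg x y) : y = z := by
  have : z ∈ T.seg x y ∩ T.seg y z := ⟨h2, hT.mem_right y z⟩
  rw [hT.seg_inter h1] at this
  exact this.symm

lemma total {x y u v : X} (hu : u ∈ T.seg x y) (hv : v ∈ T.seg x y) :
    u ∈ T.seg x v ∨ v ∈ T.seg x u := by
  rcases (hT.seg_union hv) ▸ hu with h | h
  · exact Or.inl h
  rcases (hT.seg_union hu) ▸ hv with h' | h'
  · exact Or.inr h'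
  -- u ∈ seg v y, v ∈ seg u y
  have : u ∈ T.seg u v ∩ T.seg v y := ⟨hT.mem_left u v, h⟩
  rw [hT.seg_inter h'] at this
  have huv : u = v := this
  subst huv
  exact Or.inl (hT.mem_right x u)

/-- Meet of `y₁`, `y₂` over the root `x`. -/
lemma meet (x y₁ y₂ : X) :
    ∃ m, m ∈ T.seg y₁ y₂ ∧ T.seg x m = T.seg x y₁ ∩ T.seg x y₂ := by
  obtain ⟨w, ⟨hw, h1, h2⟩, -⟩ := hT.t4 y₁ y₂ x
  have hw1 : w ∈ T.seg x y₁ := by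
    have := hT.mem_left w y₁
    rw [← h1] at this
    exact this.1
  have hw2 : w ∈ T.seg x y₂ := by
    have := hT.mem_left w y₂
    rw [← h2] at this
    exact this.1
  refine ⟨w, hw, Set.Subset.antisymm
    (Set.subset_inter (hT.seg_sub_left hw1) (hT.seg_sub_left hw2)) ?_⟩
  rintro u ⟨hu1, hu2⟩
  rcases (hT.seg_union hw1) ▸ hu1 with h | h
  · exact h
  rcases (hT.seg_union hw2) ▸ hu2 with h' | h'
  · exact h'
  -- u ∈ seg w y₁ ∩ seg w y₂
  have hu : u ∈ T.seg y₁ w ∩ T.seg w y₂ := ⟨(hT.seg_symm w y₁) ▸ h, h'⟩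
  rw [hT.seg_inter hw] at hu
  exact hu ▸ hT.mem_right x w

/-- if `x` and `w` are not equivalent at `z`, then `z ∈ [x,w]`. -/
lemma branch {x z w : X} (h : ¬ T.equivAt z x w) : z ∈ T.seg x w := by
  obtain ⟨m, hm, hseg⟩ := hT.meet z x w
  have hmm : m ∈ T.seg z x ∩ T.seg z w := hseg ▸ hT.mem_right z m
  by_cases hmz : m = z
  · exact hmz ▸ hm
  · exact absurd ⟨m, ⟨hmm.1, hmz⟩, hmm.2, hmz⟩ h

lemma equivAt_trans {x a b c : X} (h1 : T.equivAt x a b) (h2 : T.equivAt x b c) :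
    T.equivAt x a c := by
  obtain ⟨p, ⟨hpa, hpx⟩, hpb, -⟩ := h1
  obtain ⟨q, ⟨hqb, hqx⟩, hqc, -⟩ := h2
  rcases hT.total hpb hqb with h | h
  · exact ⟨p, ⟨hpa, hpx⟩, hT.seg_sub_left hqc h, hpx⟩
  · exact ⟨q, ⟨hT.seg_sub_left hpa h, hqx⟩, hqc, hqx⟩

lemma equivAt_refl {x y : X} (h : y ≠ x) : T.equivAt x y y := by
  exact ⟨y, ⟨hT.mem_right x y, h⟩, ⟨hT.mem_right x y, h⟩⟩

lemma tangent_eq {z y x' : X} (h : x' ∈ T.tangentSet z y) :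
    T.tangentSet z y = T.tangentSet z x' := by
  obtain ⟨hx', he⟩ := h
  ext u
  constructor
  · rintro ⟨hu, h1⟩
    exact ⟨hu, hT.equivAt_trans (equivAt_symm he) h1⟩
  · rintro ⟨hu, h1⟩
    exact ⟨hu, hT.equivAt_trans he h1⟩

lemma le_refl' {x y a : X} (ha : a ∈ T.seg x y) : T.le x y a a := by
  obtain ⟨f, -, hf⟩ := hT.interval x y
  exact (hf a ha a ha).2 le_rfl

lemma le_antisymm' {x y p q : X} (hp : p ∈ T.seg x y) (hq : q ∈ T.seg x y)
    (h1 : T.le x y p q) (h2 : T.le x y q p) : p = q := by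
  obtain ⟨f, hbij, hf⟩ := hT.interval x y
  have hfeq : f p = f q := le_antisymm ((hf p hp q hq).1 h1) ((hf q hq p hp).1 h2)
  rcases hbij with hbij | hbij
  · exact hbij.injOn hp hq hfeq
  · exact hbij.injOn hp hq hfeq

/-- In the interval `[x,y]`, `p ∈ [x,q]` iff `p ≤ q`. -/
lemma mem_seg_iff_le {x y p q : X} (hp : p ∈ T.seg x y) (hq : q ∈ T.seg x y) :
    p ∈ T.seg x q ↔ T.le x y p q := by
  constructor
  · intro hpq
    by_cases hqx : q = x
    · subst hqx
      rw [hT.t1 q] at hpq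
      rw [hpq]
      exact hT.le_refl' hq
    · have hpqx : p ∈ T.seg q x := by rw [(hT.t2 q x hqx).1]; exact hpq
      have h1 : T.le q x q p := (hT.t2 q x hqx).2.2.1 p hpqx
      have h2 : T.le x q p q := ((hT.t2 x q (Ne.symm hqx)).2.1 p hpq q (hT.mem_right x q)).2 h1
      exact ((hT.t3 x y q hq).2.2.1 p hpq q (hT.mem_right x q)).1 h2
  · intro hle
    rcases (hT.seg_union hq) ▸ hp with h | h
    · exact h
    · by_cases hqy : q = y
      · subst hqy
        rw [hT.t1 q] at h
        exact h ▸ hT.mem_right x q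
      · have h1 : T.le q y q p := (hT.t2 q y hqy).2.2.1 p h
        have h2 : T.le x y q p := ((hT.t3 x y q hq).2.2.2.1 q (hT.mem_left q y) p h).1 h1
        have : p = q := hT.le_antisymm' hp hq hle h2
        exact this ▸ hT.mem_right x q

lemma le_nhds (F : Ultrafilter X) (x : X)
    (h : ∀ z, z ≠ x → T.tangentSet z x ∈ F) : ↑F ≤ @nhds X T.weakTopology x := by
  rw [weakTopology, TopologicalSpace.nhds_generateFrom]
  refine le_iInf₂ fun s hs => ?_
  obtain ⟨hxs, z, y, hyz, rfl⟩ := hs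
  rw [Filter.le_principal_iff]
  rw [hT.tangent_eq hxs]
  exact h z (Ne.symm hxs.1)

end IsTree

end TreeData

namespace TreeData

variable {X : Type u} {T : TreeData X}

/-- `y` is admissible for the ultrafilter `F` (with root `x₀`): at every point `z`
strictly between `x₀` and `y`, the tangent direction of `y` at `z` belongs to `F`. -/
def Adm (T : TreeData X) (F : Ultrafilter X) (x₀ y : X) : Prop :=
  ∀ z ∈ T.seg x₀ y, z ≠ y → T.tangentSet z y ∈ F

namespace IsTree

variable (hT : T.IsTree)
include hT

lemma adm_chain (F : Ultrafilter X) (x₀ : X) {y₁ y₂ : X}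
    (h1 : T.Adm F x₀ y₁) (h2 : T.Adm F x₀ y₂) :
    y₁ ∈ T.seg x₀ y₂ ∨ y₂ ∈ T.seg x₀ y₁ := by
  obtain ⟨m, hm, hseg⟩ := hT.meet x₀ y₁ y₂
  have hm1 : m ∈ T.seg x₀ y₁ := (hseg ▸ hT.mem_right x₀ m).1
  have hm2 : m ∈ T.seg x₀ y₂ := (hseg ▸ hT.mem_right x₀ m).2
  by_cases e1 : m = y₁
  · exact Or.inl (e1 ▸ hm2)
  by_cases e2 : m = y₂
  · exact Or.inr (e2 ▸ hm1)
  exfalso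
  have ht1 : T.tangentSet m y₁ ∈ F := h1 m hm1 e1
  have ht2 : T.tangentSet m y₂ ∈ F := h2 m hm2 e2
  obtain ⟨u, hu1, hu2⟩ := Ultrafilter.nonempty_of_mem (Filter.inter_mem ht1 ht2)
  have hequiv : T.equivAt m y₁ y₂ := hT.equivAt_trans hu1.2 (equivAt_symm hu2.2)
  obtain ⟨p, ⟨hp1, hpm⟩, hp2, -⟩ := hequiv
  have hpx : p ∈ T.seg x₀ m := by
    rw [hseg]
    exact ⟨hT.seg_sub_right hm1 hp1, hT.seg_sub_right hm2 hp2⟩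
  have hsing : p ∈ T.seg x₀ m ∩ T.seg m y₁ := ⟨hpx, hp1⟩
  rw [hT.seg_inter hm1] at hsing
  exact hpm hsing

end IsTree

end TreeData

/-- **Every tree is compact in its weak topology.** -/
theorem tree_compactSpace {X : Type u} (T : TreeData X) (hT : T.IsTree) :
    @CompactSpace X T.weakTopology := by
  letI := T.weakTopology
  rcases isEmpty_or_nonempty X with hempty | hne
  · exact ⟨by rw [Set.univ_eq_empty_iff.mpr hempty]; exact isCompact_empty⟩
  rw [← isCompact_univ_iff, isCompact_iff_ultrafilter_le_nhds]
  intro F _hFp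
  by_contra hcon
  push_neg at hcon
  have hcon' : ∀ x : X, ¬ (↑F ≤ @nhds X T.weakTopology x) := fun x => hcon x (Set.mem_univ x)
  -- no singleton is in F
  have hsingle : ∀ z : X, {z} ∉ F := by
    intro z hz
    refine hcon' z (fun U hU => ?_)
    exact Filter.mem_of_superset hz (Set.singleton_subset_iff.mpr (mem_of_mem_nhds hU))
  -- F converges nowhere, so at every point some incoming direction is missing
  have hnotconv : ∀ x : X, ∃ z, z ≠ x ∧ T.tangentSet z x ∉ F := by
    intro x
    by_contra h
    push_neg at h
    exact hcon' x (hT.le_nhds F x (fun z hz => h z hz))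
  -- if the direction of x at z is missing, the direction of z at x is present
  have hflip : ∀ z x : X, z ≠ x → T.tangentSet z x ∉ F → T.tangentSet x z ∈ F := by
    intro z x hzx hnot
    have hc : (T.tangentSet z x)ᶜ ∈ F := Ultrafilter.compl_mem_iff_notMem.mpr hnot
    have hsub : (T.tangentSet z x)ᶜ ⊆ {z} ∪ T.tangentSet x z := by
      intro u hu
      by_cases huz : u = z
      · exact Or.inl huz
      · have hnequiv : ¬ T.equivAt z x u := fun he => hu ⟨huz, he⟩
        have hzmem : z ∈ T.seg x u := hT.branch hnequiv
        have hux : u ≠ x := by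
          rintro rfl
          exact hu ⟨Ne.symm hzx, hT.equivAt_refl (Ne.symm hzx)⟩
        exact Or.inr ⟨hux, ⟨z, ⟨hT.mem_right x z, hzx⟩, hzmem, hzx⟩⟩
    rcases Ultrafilter.union_mem_iff.mp (F.mem_of_superset hc hsub) with h | h
    · exact absurd h (hsingle z)
    · exact h
  obtain ⟨x₀⟩ := hne
  -- the root is admissible
  have hadm0 : T.Adm F x₀ x₀ := by
    intro z hz hne'
    rw [hT.t1 x₀] at hz
    exact absurd hz hne'
  -- apply (T5) to the directed family of admissible points
  have hdirected : IsDirected {y : X // T.Adm F x₀ y} (fun a b => a.1 ∈ T.seg x₀ b.1) := by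
    constructor
    intro a b
    rcases hT.adm_chain F x₀ a.2 b.2 with hc | hc
    · exact ⟨b, hc, hT.mem_right x₀ b.1⟩
    · exact ⟨a, hT.mem_right x₀ a.1, hc⟩
  obtain ⟨w, hw⟩ := hT.t5 {y : X // T.Adm F x₀ y} (fun a b => a.1 ∈ T.seg x₀ b.1)
    ⟨⟨x₀, hadm0⟩⟩ hdirected x₀ (fun a => a.1) (fun a b hab => hT.seg_sub_left hab)
  -- `w` is an upper bound for admissible points
  have hub : ∀ a : X, T.Adm F x₀ a → a ∈ T.seg x₀ w := by
    intro a ha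
    by_cases hax : a = x₀
    · subst hax; exact hT.mem_left a w
    obtain ⟨m, hm, hseg⟩ := hT.meet x₀ a w
    have hdia : T.seg x₀ a \ {a} ⊆ T.seg x₀ m := by
      intro u hu
      have humem : u ∈ ⋃ b : {y : X // T.Adm F x₀ y}, (T.seg x₀ b.1 \ {b.1}) :=
        Set.mem_iUnion.mpr ⟨⟨a, ha⟩, hu⟩
      rw [hw] at humem
      rw [hseg]
      exact ⟨hu.1, humem.1⟩
    have hmw : m ∈ T.seg x₀ w := (hseg ▸ hT.mem_right x₀ m).2
    have hma : m ∈ T.seg x₀ a := (hseg ▸ hT.mem_right x₀ m).1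
    by_cases hek : m = a
    · exact hek ▸ hmw
    exfalso
    obtain ⟨f, hbij, hford⟩ := hT.interval x₀ a
    rcases hbij with hbij | hbij
    · have hfm_le : f m ≤ f a := (hford m hma a (hT.mem_right x₀ a)).1
        ((hT.mem_seg_iff_le hma (hT.mem_right x₀ a)).1 hma)
      have hfma : f m ≠ f a := fun he => hek (hbij.injOn hma (hT.mem_right x₀ a) he)
      have hfm_lt : f m < f a := lt_of_le_of_ne hfm_le hfma
      have hm01 : f m ∈ Set.Icc (0:ℝ) 1 := hbij.mapsTo hma
      have ha01 : f a ∈ Set.Icc (0:ℝ) 1 := hbij.mapsTo (hT.mem_right x₀ a)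
      have htmem : (f m + f a)/2 ∈ Set.Icc (0:ℝ) 1 := by
        constructor
        · have := hm01.1; linarith
        · have := ha01.2; linarith
      obtain ⟨u, hu, hut⟩ := hbij.surjOn htmem
      have htm : f m < f u := by rw [hut]; linarith
      have hta : f u < f a := by rw [hut]; linarith
      have hua : u ≠ a := fun he => by rw [he] at hta; exact lt_irrefl _ hta
      have hum : u ∈ T.seg x₀ m := hdia ⟨hu, hua⟩
      have hlum : T.le x₀ a u m := (hT.mem_seg_iff_le hu hma).1 hum
      have : f u ≤ f m := (hford u hu m hma).1 hlum
      linarith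
    · have h0 : f x₀ = 0 := hbij.mapsTo (hT.mem_left x₀ a)
      have h1 : f a = 0 := hbij.mapsTo (hT.mem_right x₀ a)
      exact hax (hbij.injOn (hT.mem_right x₀ a) (hT.mem_left x₀ a) (by rw [h0, h1]))
  -- `w` itself is admissible
  have hadmw : T.Adm F x₀ w := by
    intro z hz hzw
    have hz' : z ∈ ⋃ b : {y : X // T.Adm F x₀ y}, (T.seg x₀ b.1 \ {b.1}) := by
      rw [hw]; exact ⟨hz, hzw⟩
    obtain ⟨b, hb⟩ := Set.mem_iUnion.mp hz'
    have hzb : z ≠ b.1 := hb.2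
    have hbF : T.tangentSet z b.1 ∈ F := b.2 z hb.1 hzb
    have hbw : b.1 ∈ T.seg z w := by
      have hbseg : b.1 ∈ T.seg x₀ w := hub b.1 b.2
      rcases (hT.seg_union hz) ▸ hbseg with hc | hc
      · exact absurd (hT.seg_antisymm hc hb.1).symm hzb
      · exact hc
    have hbt : b.1 ∈ T.tangentSet z w :=
      ⟨Ne.symm hzb, ⟨b.1, ⟨hbw, Ne.symm hzb⟩, hT.mem_right z b.1, Ne.symm hzb⟩⟩
    rw [hT.tangent_eq hbt]
    exact hbF
  -- final contradiction: use the missing incoming direction at `w`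
  obtain ⟨zs, hzsw, hzsF⟩ := hnotconv w
  have hwzF : T.tangentSet w zs ∈ F := hflip zs w hzsw hzsF
  have hzs_not : zs ∉ T.seg x₀ w := fun hmem => hzsF (hadmw zs hmem hzsw)
  obtain ⟨m, hm, hseg⟩ := hT.meet x₀ w zs
  have hmw : m ∈ T.seg x₀ w := (hseg ▸ hT.mem_right x₀ m).1
  have hmz : m ∈ T.seg x₀ zs := (hseg ▸ hT.mem_right x₀ m).2
  have hmzs : m ≠ zs := fun he => hzs_not (he ▸ hmw)
  by_cases hcase : m = w
  · -- `w ∈ [x₀, zs]`: either `zs` is admissible (contradicting the maximality of `w`),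
    -- or some point of `[w, zs⟩` gives back the missing direction.
    have hwzseg : w ∈ T.seg x₀ zs := hcase ▸ hmz
    by_cases hall : ∀ b ∈ T.seg w zs, b ≠ zs → T.tangentSet b zs ∈ F
    · -- `zs` is admissible
      have hadmzs : T.Adm F x₀ zs := by
        intro z hz hzzs
        rcases (hT.seg_union hwzseg) ▸ hz with hc | hc
        · by_cases hzw' : z = w
          · subst hzw'; exact hwzF
          · have hzwF : T.tangentSet z w ∈ F := hadmw z hc hzw'
            have hwzs' : w ∈ T.seg z zs := by
              rcases (hT.seg_union (hT.seg_sub_left hwzseg hc : z ∈ T.seg x₀ zs)) ▸ hwzseg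
                with hd | hd
              · exact absurd (hT.seg_antisymm hd hc).symm hzw'
              · exact hd
            have hwt : w ∈ T.tangentSet z zs :=
              ⟨Ne.symm hzw', ⟨w, ⟨hwzs', Ne.symm hzw'⟩, hT.mem_right z w, Ne.symm hzw'⟩⟩
            rw [hT.tangent_eq hwt]
            exact hzwF
        · exact hall z hc hzzs
      exact hzs_not (hub zs hadmzs)
    · push_neg at hall
      obtain ⟨b, hb1, hb2, hb3⟩ := hall
      have hzsbF : T.tangentSet zs b ∈ F := hflip b zs hb2 hb3
      have hbzs : b ∈ T.seg zs w := (hT.seg_symm w zs) ▸ (hT.seg_sub_left hb1 (hT.mem_right w b))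
      have hwt : w ∈ T.tangentSet zs b :=
        ⟨Ne.symm hzsw, ⟨b, ⟨hT.mem_right zs b, hb2⟩, hbzs, hb2⟩⟩
      rw [hT.tangent_eq hwt] at hzsbF
      exact hzsF hzsbF
  · -- `zs` branches off strictly below `w`
    have hmwF : T.tangentSet m w ∈ F := hadmw m hmw hcase
    have hsub : T.tangentSet m w ∩ T.tangentSet w zs ⊆ T.tangentSet zs w := by
      rintro u ⟨⟨hum, heu⟩, ⟨huw, heu'⟩⟩
      have hkey : ¬ T.equivAt m zs w := by
        rintro ⟨r, ⟨hr1, hrm⟩, hr2, -⟩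
        have hrx : r ∈ T.seg x₀ m := by
          rw [hseg]
          exact ⟨hT.seg_sub_right hmw hr2, hT.seg_sub_right hmz hr1⟩
        have hsing : r ∈ T.seg x₀ m ∩ T.seg m w := ⟨hrx, hr2⟩
        rw [hT.seg_inter hmw] at hsing
        exact hrm hsing
      have hneq : ¬ T.equivAt m zs u := fun he => hkey (hT.equivAt_trans he (TreeData.equivAt_symm heu))
      have hmzu : m ∈ T.seg zs u := hT.branch hneq
      have hmzw : m ∈ T.seg zs w := (hT.seg_symm w zs) ▸ hm
      have huzs : u ≠ zs := by
        rintro rfl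
        exact hkey (TreeData.equivAt_symm heu)
      exact ⟨huzs, ⟨m, ⟨hmzw, hmzs⟩, hmzu, hmzs⟩⟩
    exact hzsF (F.mem_of_superset (Filter.inter_mem hmwF hwzF) hsub)
end

section
/- Berkovich's classification of the points of the Berkovich affine line. Let K be an algebraically closed field that is complete with respect to a nontrivial non-Archimedean absolute value. For every nonempty nested collection ℰ of closed discs in K, the formula |φ|_{x_ℰ} := inf_{D ∈ ℰ} sup_{b ∈ D} |φ(b)| defines a multiplicative seminorm on the polynomial ring K[z] extending the absolute value of K; conversely, every multiplicative seminorm on K[z] extending the absolute value of K equals x_ℰ for a unique nonempty nested collection ℰ. Moreover, the bijection ℰ ↦ x_ℰ reverses order: x_ℰ ≤ x_{ℰ'} if and only if ℰ' ⊆ ℰ. -/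
/-- A closed disc `D(a,r) = {b : |b − a| ≤ r}` in `K` (degenerate discs `r = 0` allowed). -/
def IsClosedDisc {K : Type*} [NontriviallyNormedField K] (D : Set K) : Prop :=
  ∃ (a : K) (r : ℝ), 0 ≤ r ∧ D = Metric.closedBall a r

/-- A nested collection of closed discs in `K`: (a) any two members are comparable under
inclusion; (b) every closed disc containing a member is a member; (c) the collection is
closed under intersections of decreasing sequences whose intersection is a closed disc. -/
def IsNestedCollection {K : Type*} [NontriviallyNormedField K] (ℰ : Set (Set K)) : Prop :=
  (∀ D ∈ ℰ, IsClosedDisc D) ∧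
  (∀ D ∈ ℰ, ∀ D' ∈ ℰ, D ⊆ D' ∨ D' ⊆ D) ∧
  (∀ D : Set K, IsClosedDisc D → (∃ D' ∈ ℰ, D' ⊆ D) → D ∈ ℰ) ∧
  (∀ Dseq : ℕ → Set K, (∀ n, Dseq n ∈ ℰ) → (∀ n, Dseq (n + 1) ⊆ Dseq n) →
    IsClosedDisc (⋂ n, Dseq n) → (⋂ n, Dseq n) ∈ ℰ)

/-- A multiplicative seminorm on `K[z]` extending the absolute value of `K`. -/
def IsMultSeminorm {K : Type*} [NontriviallyNormedField K] (N : Polynomial K → ℝ) : Prop :=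
  (∀ φ, 0 ≤ N φ) ∧ N 0 = 0 ∧ N 1 = 1 ∧
  (∀ φ ψ, N (φ * ψ) = N φ * N ψ) ∧
  (∀ φ ψ, N (φ + ψ) ≤ N φ + N ψ) ∧
  (∀ c : K, N (Polynomial.C c) = ‖c‖)

/-- The seminorm `x_ℰ` attached to a nested collection `ℰ` of closed discs:
`|φ|_{x_ℰ} = inf_{D ∈ ℰ} sup_{b ∈ D} |φ(b)|`. -/
noncomputable def discSeminorm {K : Type*} [NontriviallyNormedField K]
    (ℰ : Set (Set K)) (φ : Polynomial K) : ℝ :=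
  sInf ((fun D : Set K => sSup ((fun b : K => ‖Polynomial.eval b φ‖) '' D)) '' ℰ)

/-!
Over an algebraically closed field a polynomial is `C c * ∏ (X - C α)`, so a multiplicative
seminorm extending `‖·‖` is determined by its values on the linear polynomials `X - C a`.

For a disc `D(a, r)` one has `sup_{D(a,r)} ‖φ‖ = ‖lc φ‖ * ∏_α max r ‖α - a‖`: a point of the disc
at distance exactly `max ‖t‖ ‖α - a‖` from every root exists for each `‖t‖ ≤ r`, and such `‖t‖`
approach `r` because the value group is divisible. Hence the disc supremum is multiplicative,
and along a chain of discs the infimum `x_ℰ` is a limit of multiplicative functions.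

Conversely a multiplicative seminorm `x` extending a non-Archimedean absolute value is itself
non-Archimedean, so the discs `D(a, r)` with `x (X - C a) ≤ r` form a nested collection. For every
nested `ℰ` one has `D(a, r) ∈ ℰ ↔ x_ℰ (X - C a) ≤ r`, which recovers `ℰ` from `x_ℰ` and gives both
the bijection and the order reversal.
-/

open Polynomial Metric Filter Topology

namespace Berkovich

section Ultrametric

variable {K : Type*} [NontriviallyNormedField K] [IsUltrametricDist K]

lemma norm_sub_le_max_norm_sub (x y z : K) : ‖x - z‖ ≤ max ‖x - y‖ ‖y - z‖ := by
  simpa only [dist_eq_norm] using IsUltrametricDist.dist_triangle_max x y z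

lemma norm_sub_eq_max_of_norm_ne_norm {x y : K} (h : ‖x‖ ≠ ‖y‖) :
    ‖x - y‖ = max ‖x‖ ‖y‖ := by
  simpa [sub_eq_add_neg] using
    IsUltrametricDist.norm_add_eq_max_of_norm_ne_norm (x := x) (y := -y) (by rwa [norm_neg])

end Ultrametric

section Field

variable {K : Type*} [NontriviallyNormedField K] [IsAlgClosed K]

/- The value group of an algebraically closed field is divisible, so it is dense in `(0, ∞)`. -/
lemma exists_norm_mem_Ioo {s r : ℝ} (hs : 0 ≤ s) (hsr : s < r) :
    ∃ t : K, s < ‖t‖ ∧ ‖t‖ < r := by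
  rcases hs.eq_or_lt with rfl | hs
  · exact NormedField.exists_norm_lt K hsr
  obtain ⟨c, hc⟩ := NormedField.exists_one_lt_norm K
  obtain ⟨n, hn⟩ := pow_unbounded_of_one_lt ‖c‖ ((one_lt_div hs).2 hsr)
  have hn0 : n ≠ 0 := by
    rintro rfl
    rw [pow_zero] at hn
    linarith
  obtain ⟨y, rfl⟩ := IsAlgClosed.exists_pow_nat_eq c (Nat.pos_of_ne_zero hn0)
  rw [norm_pow] at hc hn
  have hy : 1 < ‖y‖ := (one_lt_pow_iff_of_nonneg (norm_nonneg y) hn0).1 hc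
  have hyrs : ‖y‖ < r / s :=
    (pow_lt_pow_iff_left₀ (norm_nonneg y) (div_pos (hs.trans hsr) hs).le hn0).1 hn
  obtain ⟨k, hk, hk'⟩ := exists_mem_Ico_zpow hs hy
  refine ⟨y ^ (k + 1), by rwa [norm_zpow], ?_⟩
  calc ‖y ^ (k + 1)‖ = ‖y‖ ^ k * ‖y‖ := by rw [norm_zpow, zpow_add_one₀ (by positivity)]
    _ ≤ s * ‖y‖ := by gcongr
    _ < s * (r / s) := by gcongr
    _ = r := by field_simp

lemma exists_tendsto_norm {r : ℝ} (hr : 0 ≤ r) :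
    ∃ t : ℕ → K, (∀ n, ‖t n‖ ≤ r) ∧ Tendsto (fun n => ‖t n‖) atTop (𝓝 r) := by
  rcases hr.eq_or_lt with rfl | hr
  · exact ⟨0, fun _ => by simp, by simp⟩
  have hgap (n : ℕ) : ∃ t : K, max 0 (r - 1 / ((n : ℝ) + 1)) < ‖t‖ ∧ ‖t‖ < r := by
    have hn : (0 : ℝ) < 1 / ((n : ℝ) + 1) := by positivity
    exact exists_norm_mem_Ioo (le_max_left _ _) (max_lt hr (sub_lt_self r hn))
  choose t ht using hgap
  refine ⟨t, fun n => (ht n).2.le, ?_⟩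
  have hlow : Tendsto (fun n : ℕ => r - 1 / ((n : ℝ) + 1)) atTop (𝓝 r) := by
    simpa using tendsto_const_nhds.sub (tendsto_one_div_add_atTop_nhds_zero_nat (𝕜 := ℝ))
  exact tendsto_of_tendsto_of_tendsto_of_le_of_le hlow tendsto_const_nhds
    (fun n => (le_max_right _ _).trans (ht n).1.le) (fun n => (ht n).2.le)

variable [IsUltrametricDist K]

/- A root `x` of `∏ (X - s) - 1` has `∏ ‖x - s‖ = 1`; in the closed unit ball this forces every
factor to have norm one. -/
lemma exists_norm_sub_eq_one (S : Finset K) (hS : ∀ s ∈ S, ‖s‖ ≤ 1) :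
    ∃ x : K, ‖x‖ ≤ 1 ∧ ∀ s ∈ S, ‖x - s‖ = 1 := by
  classical
  rcases S.eq_empty_or_nonempty with rfl | hSne
  · exact ⟨0, by simp, by simp⟩
  obtain ⟨x, hx⟩ : ∃ x, IsRoot (∏ s ∈ S, (X - C s) - C 1) x := by
    refine IsAlgClosed.exists_root _ fun h => hSne.card_pos.ne' ?_
    have hcard : (∏ s ∈ S, (X - C s)).natDegree = S.card :=
      natDegree_finsetProd_X_sub_C_eq_card S id
    rw [← hcard, ← natDegree_sub_C (a := (1 : K))]
    exact natDegree_eq_of_degree_eq_some h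
  have hprod : ∏ s ∈ S, ‖x - s‖ = 1 := by
    rw [← norm_prod, (by simpa [eval_prod, sub_eq_zero] using hx : ∏ s ∈ S, (x - s) = 1),
      norm_one]
  have hx1 : ‖x‖ ≤ 1 := by
    by_contra! hx1
    have heq (s) (hs : s ∈ S) : ‖x - s‖ = ‖x‖ := by
      rw [norm_sub_eq_max_of_norm_ne_norm ((hS s hs).trans_lt hx1).ne',
        max_eq_left ((hS s hs).trans hx1.le)]
    rw [Finset.prod_congr rfl heq, Finset.prod_const] at hprod
    exact (one_lt_pow₀ hx1 hSne.card_pos.ne').ne' hprod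
  have hle (s) (hs : s ∈ S) : ‖x - s‖ ≤ 1 :=
    (norm_sub_le_max_norm_sub x 0 s).trans (by simpa using max_le hx1 (hS s hs))
  refine ⟨x, hx1, fun s hs => (hle s hs).antisymm ?_⟩
  have hrest : ∏ u ∈ S.erase s, ‖x - u‖ ≤ 1 :=
    Finset.prod_le_one (fun _ _ => norm_nonneg _) fun u hu => hle u (Finset.mem_of_mem_erase hu)
  rw [← Finset.mul_prod_erase S _ hs] at hprod
  nlinarith [norm_nonneg (x - s)]

end Field

section Gauss

variable {K : Type*} [NontriviallyNormedField K]

noncomputable def supNormOn (φ : K[X]) (D : Set K) : ℝ :=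
  sSup ((fun b => ‖φ.eval b‖) '' D)

noncomputable def ballNorm (φ : K[X]) (a : K) (r : ℝ) : ℝ :=
  ‖φ.leadingCoeff‖ * (φ.roots.map fun α => max r ‖α - a‖).prod

lemma ballNorm_nonneg (φ : K[X]) (a : K) {r : ℝ} (hr : 0 ≤ r) : 0 ≤ ballNorm φ a r := by
  refine mul_nonneg (norm_nonneg _) (Multiset.prod_nonneg fun x hx => ?_)
  obtain ⟨α, -, rfl⟩ := Multiset.mem_map.1 hx
  exact hr.trans (le_max_left _ _)

lemma ballNorm_mul (φ ψ : K[X]) (a : K) (r : ℝ) :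
    ballNorm (φ * ψ) a r = ballNorm φ a r * ballNorm ψ a r := by
  rcases eq_or_ne φ 0 with rfl | hφ
  · simp [ballNorm]
  rcases eq_or_ne ψ 0 with rfl | hψ
  · simp [ballNorm]
  simp only [ballNorm, leadingCoeff_mul, norm_mul, roots_mul (mul_ne_zero hφ hψ),
    Multiset.map_add, Multiset.prod_add]
  ring

lemma ballNorm_X_sub_C (b a : K) (r : ℝ) : ballNorm (X - C b) a r = max r ‖b - a‖ := by
  simp [ballNorm]

lemma supNormOn_C {D : Set K} (hD : D.Nonempty) (c : K) : supNormOn (C c) D = ‖c‖ := by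
  simp [supNormOn, hD.image_const]

lemma continuous_ballNorm (φ : K[X]) (a : K) : Continuous (ballNorm φ a) :=
  continuous_const.mul (continuous_multiset_prod _ fun _ _ => continuous_id.max continuous_const)

variable [IsAlgClosed K]

lemma norm_eval_eq_prod_roots (φ : K[X]) (b : K) :
    ‖φ.eval b‖ = ‖φ.leadingCoeff‖ * (φ.roots.map fun α => ‖b - α‖).prod := by
  rw [(IsAlgClosed.splits φ).eval_eq_prod_roots, norm_mul, ← normHom_apply (_ : Multiset K).prod,
    map_multiset_prod, Multiset.map_map]
  rfl

variable [IsUltrametricDist K]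

lemma norm_eval_le_ballNorm (φ : K[X]) {a b : K} {r : ℝ} (hb : b ∈ closedBall a r) :
    ‖φ.eval b‖ ≤ ballNorm φ a r := by
  rw [norm_eval_eq_prod_roots, ballNorm]
  refine mul_le_mul_of_nonneg_left (Multiset.prod_map_le_prod_map₀ _ _
    (fun _ _ => norm_nonneg _) fun α _ => ?_) (norm_nonneg _)
  rw [mem_closedBall, dist_eq_norm] at hb
  calc ‖b - α‖ ≤ max ‖b - a‖ ‖a - α‖ := norm_sub_le_max_norm_sub b a α
    _ ≤ max r ‖α - a‖ := by rw [norm_sub_rev a α]; exact max_le_max hb le_rfl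

lemma bddAbove_norm_eval_closedBall (φ : K[X]) (a : K) (r : ℝ) :
    BddAbove ((fun b => ‖φ.eval b‖) '' closedBall a r) :=
  ⟨ballNorm φ a r, by rintro _ ⟨b, hb, rfl⟩; exact norm_eval_le_ballNorm φ hb⟩

lemma exists_norm_sub_eq_max (t : K) (S : Finset K) :
    ∃ y : K, ‖y‖ ≤ ‖t‖ ∧ ∀ s ∈ S, ‖y - s‖ = max ‖t‖ ‖s‖ := by
  classical
  rcases eq_or_ne t 0 with rfl | ht
  · exact ⟨0, by simp, fun s _ => by simp⟩
  obtain ⟨x, hx, hxS⟩ := exists_norm_sub_eq_one ((S.filter (‖·‖ ≤ ‖t‖)).image (· / t)) (by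
    simp only [Finset.mem_image, Finset.mem_filter]
    rintro _ ⟨s, ⟨-, hs⟩, rfl⟩
    rw [norm_div]
    exact div_le_one_of_le₀ hs (norm_nonneg t))
  have hy : ‖t * x‖ ≤ ‖t‖ := by
    rw [norm_mul]
    exact mul_le_of_le_one_right (norm_nonneg t) hx
  refine ⟨t * x, hy, fun s hs => ?_⟩
  rcases le_or_gt ‖s‖ ‖t‖ with hst | hst
  · have hxs := hxS (s / t) (Finset.mem_image_of_mem _ (Finset.mem_filter.2 ⟨hs, hst⟩))
    rw [max_eq_left hst, show t * x - s = t * (x - s / t) by field_simp, norm_mul, hxs, mul_one]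
  · rw [norm_sub_eq_max_of_norm_ne_norm (hy.trans_lt hst).ne, max_eq_right (hy.trans hst.le),
      max_eq_right hst.le]

lemma exists_norm_eval_eq_ballNorm (φ : K[X]) (a t : K) :
    ∃ b ∈ closedBall a ‖t‖, ‖φ.eval b‖ = ballNorm φ a ‖t‖ := by
  classical
  obtain ⟨y, hy, hyS⟩ := exists_norm_sub_eq_max t (φ.roots.toFinset.image (· - a))
  refine ⟨a + y, by simpa [dist_eq_norm] using hy, ?_⟩
  rw [norm_eval_eq_prod_roots, ballNorm]
  congr 2
  refine Multiset.map_congr rfl fun α hα => ?_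
  rw [← hyS (α - a) (Finset.mem_image_of_mem _ (Multiset.mem_toFinset.2 hα))]
  congr 1
  ring

/- When `r` is not a norm the supremum need not be attained; it is approached along the radii
`‖t‖ ↑ r`. -/
lemma supNormOn_closedBall (φ : K[X]) (a : K) {r : ℝ} (hr : 0 ≤ r) :
    supNormOn φ (closedBall a r) = ballNorm φ a r := by
  refine le_antisymm (csSup_le ((nonempty_closedBall.2 hr).image _) ?_) ?_
  · rintro _ ⟨b, hb, rfl⟩
    exact norm_eval_le_ballNorm φ hb
  · obtain ⟨t, htr, ht⟩ := exists_tendsto_norm (K := K) hr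
    refine le_of_tendsto' (((continuous_ballNorm φ a).tendsto r).comp ht) fun n => ?_
    obtain ⟨b, hb, hφb⟩ := exists_norm_eval_eq_ballNorm φ a (t n)
    rw [Function.comp_apply, ← hφb]
    exact le_csSup (bddAbove_norm_eval_closedBall φ a r)
      ⟨b, closedBall_subset_closedBall (htr n) hb, rfl⟩

end Gauss

lemma _root_.IsClosedDisc.nonempty {K : Type*} [NontriviallyNormedField K] {D : Set K}
    (hD : IsClosedDisc D) : D.Nonempty := by
  obtain ⟨a, r, hr, rfl⟩ := hD
  exact nonempty_closedBall.2 hr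

section DiscSeminorm

variable {K : Type*} [NontriviallyNormedField K] [IsAlgClosed K] [IsUltrametricDist K]
  {ℰ : Set (Set K)} {D D' : Set K}

lemma bddAbove_norm_eval (hD : IsClosedDisc D) (φ : K[X]) :
    BddAbove ((fun b => ‖φ.eval b‖) '' D) := by
  obtain ⟨a, r, -, rfl⟩ := hD
  exact bddAbove_norm_eval_closedBall φ a r

lemma supNormOn_nonneg (hD : IsClosedDisc D) (φ : K[X]) : 0 ≤ supNormOn φ D := by
  obtain ⟨a, r, hr, rfl⟩ := hD
  rw [supNormOn_closedBall φ a hr]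
  exact ballNorm_nonneg φ a hr

lemma supNormOn_mono (hD : D.Nonempty) (hD' : IsClosedDisc D') (h : D ⊆ D') (φ : K[X]) :
    supNormOn φ D ≤ supNormOn φ D' :=
  csSup_le_csSup (bddAbove_norm_eval hD' φ) (hD.image _) (Set.image_mono h)

lemma supNormOn_mul (hD : IsClosedDisc D) (φ ψ : K[X]) :
    supNormOn (φ * ψ) D = supNormOn φ D * supNormOn ψ D := by
  obtain ⟨a, r, hr, rfl⟩ := hD
  simp only [supNormOn_closedBall _ a hr, ballNorm_mul]

lemma supNormOn_add_le (hD : IsClosedDisc D) (φ ψ : K[X]) :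
    supNormOn (φ + ψ) D ≤ supNormOn φ D + supNormOn ψ D := by
  refine csSup_le (hD.nonempty.image _) ?_
  rintro _ ⟨b, hb, rfl⟩
  dsimp only
  rw [eval_add]
  exact (norm_add_le _ _).trans (add_le_add (le_csSup (bddAbove_norm_eval hD φ) ⟨b, hb, rfl⟩)
    (le_csSup (bddAbove_norm_eval hD ψ) ⟨b, hb, rfl⟩))

lemma discSeminorm_le_supNormOn (hdisc : ∀ D ∈ ℰ, IsClosedDisc D) (hD : D ∈ ℰ) (φ : K[X]) :
    discSeminorm ℰ φ ≤ supNormOn φ D :=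
  csInf_le ⟨0, by rintro _ ⟨D, hD, rfl⟩; exact supNormOn_nonneg (hdisc D hD) φ⟩ ⟨D, hD, rfl⟩

lemma tendsto_supNormOn_discSeminorm (hdisc : ∀ D ∈ ℰ, IsClosedDisc D) (φ : K[X]) :
    Tendsto (fun D : ℰ => supNormOn φ D) atBot (𝓝 (discSeminorm ℰ φ)) := by
  rw [discSeminorm, sInf_image']
  refine tendsto_atBot_ciInf (fun D D' h => ?_) ⟨0, ?_⟩
  · exact supNormOn_mono (hdisc D D.2).nonempty (hdisc D' D'.2) h φ
  · rintro _ ⟨D, rfl⟩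
    exact supNormOn_nonneg (hdisc D D.2) φ

/- Along the codirected chain `ℰ` every `supNormOn φ` converges to `discSeminorm ℰ φ`, so the
identities satisfied by `supNormOn` on each disc pass to the limit. -/
theorem isMultSeminorm_discSeminorm (hdisc : ∀ D ∈ ℰ, IsClosedDisc D)
    (hchain : ∀ D ∈ ℰ, ∀ D' ∈ ℰ, D ⊆ D' ∨ D' ⊆ D) (hne : ℰ.Nonempty) :
    IsMultSeminorm (discSeminorm ℰ) := by
  have : Nonempty ℰ := hne.to_subtype
  have : IsCodirectedOrder ℰ := ⟨fun D D' => (hchain D D.2 D' D'.2).elim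
    (fun h => ⟨D, le_rfl, h⟩) fun h => ⟨D', h, le_rfl⟩⟩
  have lim := tendsto_supNormOn_discSeminorm hdisc
  have hC (c : K) : discSeminorm ℰ (C c) = ‖c‖ := tendsto_nhds_unique (lim (C c))
    (tendsto_const_nhds.congr fun D => (supNormOn_C (hdisc D D.2).nonempty c).symm)
  refine ⟨fun φ => ge_of_tendsto' (lim φ) fun D => supNormOn_nonneg (hdisc D D.2) φ,
    by simpa using hC 0, by simpa using hC 1, fun φ ψ => ?_, fun φ ψ => ?_, hC⟩
  · exact tendsto_nhds_unique (lim (φ * ψ))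
      (((lim φ).mul (lim ψ)).congr fun D => (supNormOn_mul (hdisc D D.2) φ ψ).symm)
  · exact le_of_tendsto_of_tendsto' (lim (φ + ψ)) ((lim φ).add (lim ψ))
      fun D => supNormOn_add_le (hdisc D D.2) φ ψ

end DiscSeminorm

lemma iInter_closedBall_add_one_div {α : Type*} [PseudoMetricSpace α] (a : α) (r : ℝ) :
    ⋂ n : ℕ, closedBall a (r + 1 / ((n : ℝ) + 1)) = closedBall a r := by
  ext b
  simp only [Set.mem_iInter, mem_closedBall]
  have hlim : Tendsto (fun n : ℕ => r + 1 / ((n : ℝ) + 1)) atTop (𝓝 r) := by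
    simpa using tendsto_const_nhds.add (tendsto_one_div_add_atTop_nhds_zero_nat (𝕜 := ℝ))
  exact ⟨ge_of_tendsto' hlim, fun h n => h.trans (le_add_of_nonneg_right (by positivity))⟩

def discsOf {K : Type*} [NontriviallyNormedField K] (N : K[X] → ℝ) : Set (Set K) :=
  {D | ∃ a r, 0 ≤ r ∧ D = closedBall a r ∧ N (X - C a) ≤ r}

lemma discsOf_nonempty {K : Type*} [NontriviallyNormedField K] {N : K[X] → ℝ}
    (hN : IsMultSeminorm N) : (discsOf N).Nonempty :=
  ⟨closedBall 0 (N X), 0, N X, hN.1 X, rfl, by simp⟩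

section Recovery

variable {K : Type*} [NontriviallyNormedField K] [IsAlgClosed K] [IsUltrametricDist K]
  {ℰ : Set (Set K)}

lemma closedBall_subset_closedBall_iff_of_isAlgClosed {a a' : K} {r r' : ℝ} (hr : 0 ≤ r) :
    closedBall a r ⊆ closedBall a' r' ↔ r ≤ r' ∧ ‖a - a'‖ ≤ r' := by
  refine ⟨fun h => ?_, fun ⟨hrr, ha⟩ => ?_⟩
  · have ha : ‖a - a'‖ ≤ r' := by simpa [dist_eq_norm] using h (mem_closedBall_self hr)
    refine ⟨le_of_not_gt fun hr' => ?_, ha⟩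
    obtain ⟨t, ht, htr⟩ := exists_norm_mem_Ioo (K := K) ((norm_nonneg _).trans ha) hr'
    have hat : ‖a + t - a'‖ ≤ r' := by
      simpa [dist_eq_norm] using h (by simpa [dist_eq_norm] using htr.le)
    have : ‖t‖ ≤ r' := calc
      ‖t‖ = ‖(a + t) - a‖ := by simp
      _ ≤ max ‖a + t - a'‖ ‖a' - a‖ := norm_sub_le_max_norm_sub _ _ _
      _ ≤ r' := max_le hat (by rwa [norm_sub_rev])
    linarith
  · rw [IsUltrametricDist.closedBall_eq_of_mem (x := a') (y := a)
      (by simpa [dist_eq_norm] using ha)]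
    exact closedBall_subset_closedBall hrr

lemma subset_closedBall_supNormOn {D : Set K} (hD : IsClosedDisc D) (a : K) :
    D ⊆ closedBall a (supNormOn (X - C a) D) := fun b hb => by
  rw [mem_closedBall, dist_eq_norm]
  calc ‖b - a‖ = ‖(X - C a).eval b‖ := by simp
    _ ≤ supNormOn (X - C a) D := le_csSup (bddAbove_norm_eval hD _) ⟨b, hb, rfl⟩

lemma closedBall_mem_of_discSeminorm_lt (hℰ : IsNestedCollection ℰ) (hne : ℰ.Nonempty) {a : K}
    {r : ℝ} (h : discSeminorm ℰ (X - C a) < r) : closedBall a r ∈ ℰ := by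
  obtain ⟨_, ⟨D, hD, rfl⟩, hDr⟩ := exists_lt_of_csInf_lt (hne.image _) h
  have hsub : D ⊆ closedBall a r := (subset_closedBall_supNormOn (hℰ.1 D hD) a).trans
    (closedBall_subset_closedBall hDr.le)
  obtain ⟨b, hb⟩ := (hℰ.1 D hD).nonempty
  exact hℰ.2.2.1 _ ⟨a, r, dist_nonneg.trans (hsub hb), rfl⟩ ⟨D, hD, hsub⟩

theorem closedBall_mem_iff (hℰ : IsNestedCollection ℰ) (hne : ℰ.Nonempty) {a : K} {r : ℝ}
    (hr : 0 ≤ r) : closedBall a r ∈ ℰ ↔ discSeminorm ℰ (X - C a) ≤ r := by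
  refine ⟨fun h => ?_, fun h => ?_⟩
  · calc discSeminorm ℰ (X - C a) ≤ supNormOn (X - C a) (closedBall a r) :=
          discSeminorm_le_supNormOn hℰ.1 h _
      _ = r := by rw [supNormOn_closedBall _ a hr, ballNorm_X_sub_C, sub_self, norm_zero,
          max_eq_left hr]
  · have hmem (n : ℕ) : closedBall a (r + 1 / ((n : ℝ) + 1)) ∈ ℰ :=
      closedBall_mem_of_discSeminorm_lt hℰ hne (h.trans_lt (lt_add_of_pos_right r (by positivity)))
    have hint := hℰ.2.2.2 _ hmem (fun n => closedBall_subset_closedBall (by gcongr; simp))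
      (by rw [iInter_closedBall_add_one_div]; exact ⟨a, r, hr, rfl⟩)
    rwa [iInter_closedBall_add_one_div] at hint

theorem discsOf_discSeminorm (hℰ : IsNestedCollection ℰ) (hne : ℰ.Nonempty) :
    discsOf (discSeminorm ℰ) = ℰ := by
  ext D
  refine ⟨fun ⟨a, r, hr, hD, h⟩ => hD ▸ (closedBall_mem_iff hℰ hne hr).2 h, fun hD => ?_⟩
  obtain ⟨a, r, hr, rfl⟩ := hℰ.1 D hD
  exact ⟨a, r, hr, rfl, (closedBall_mem_iff hℰ hne hr).1 hD⟩

theorem discSeminorm_le_iff {ℰ' : Set (Set K)} (hℰ : IsNestedCollection ℰ) (hne : ℰ.Nonempty)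
    (hℰ' : IsNestedCollection ℰ') (hne' : ℰ'.Nonempty) :
    (∀ φ, discSeminorm ℰ φ ≤ discSeminorm ℰ' φ) ↔ ℰ' ⊆ ℰ := by
  refine ⟨fun h => ?_, fun h φ => csInf_le_csInf ?_ (hne'.image _) (Set.image_mono h)⟩
  · rw [← discsOf_discSeminorm hℰ hne, ← discsOf_discSeminorm hℰ' hne']
    rintro _ ⟨a, r, hr, rfl, har⟩
    exact ⟨a, r, hr, rfl, (h _).trans har⟩
  · exact ⟨0, by rintro _ ⟨D, hD, rfl⟩; exact supNormOn_nonneg (hℰ.1 D hD) φ⟩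

end Recovery

lemma le_of_forall_pow_le_mul_pow {x y : ℝ} (hy : 0 ≤ y)
    (h : ∀ n : ℕ, x ^ n ≤ (n + 1) * y ^ n) : x ≤ y := by
  by_contra! hxy
  rcases hy.eq_or_lt with rfl | hy
  · linarith [h 1]
  obtain ⟨n, hn⟩ := Real.exists_natCast_add_one_lt_pow_of_one_lt ((one_lt_div hy).2 hxy)
  rw [div_pow, lt_div_iff₀ (pow_pos hy n)] at hn
  linarith [h n]

section Seminorm

variable {K : Type*} [NontriviallyNormedField K] {N : K[X] → ℝ}

def _root_.IsMultSeminorm.toMonoidHom (hN : IsMultSeminorm N) : K[X] →* ℝ where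
  toFun := N
  map_one' := hN.2.2.1
  map_mul' := hN.2.2.2.1

lemma monoidHom_ext_of_X_sub_C [IsAlgClosed K] {M : Type*} [CommMonoid M] {F G : K[X] →* M}
    (hC : ∀ c, F (C c) = G (C c)) (hX : ∀ a, F (X - C a) = G (X - C a)) : F = G := by
  ext φ
  rw [(IsAlgClosed.splits φ).eq_prod_roots, map_mul, map_mul, map_multiset_prod,
    map_multiset_prod, hC, Multiset.map_map, Multiset.map_map]
  simp only [Function.comp_def, hX]

variable [IsUltrametricDist K]

/- The binomial expansion bounds `N (φ + ψ) ^ n` by `(n + 1) * max (N φ) (N ψ) ^ n`, because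
binomial coefficients have norm at most one in `K`. -/
theorem _root_.IsMultSeminorm.add_le_max (hN : IsMultSeminorm N) (φ ψ : K[X]) :
    N (φ + ψ) ≤ max (N φ) (N ψ) := by
  have hpow (χ : K[X]) (n : ℕ) : N (χ ^ n) = N χ ^ n := map_pow hN.toMonoidHom χ n
  obtain ⟨h0, hzero, -, hmul, hadd, hC⟩ := hN
  set M := max (N φ) (N ψ)
  have hterm (n k : ℕ) : N (φ ^ k * ψ ^ (n - k) * n.choose k) ≤ N φ ^ k * N ψ ^ (n - k) := by
    rw [hmul, hmul, hpow, hpow, ← map_natCast C, hC]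
    exact mul_le_of_le_one_right (mul_nonneg (pow_nonneg (h0 φ) k) (pow_nonneg (h0 ψ) _))
      (IsUltrametricDist.norm_natCast_le_one K _)
  refine le_of_forall_pow_le_mul_pow ((h0 φ).trans (le_max_left _ _)) fun n => ?_
  calc N (φ + ψ) ^ n
      = N (∑ k ∈ Finset.range (n + 1), φ ^ k * ψ ^ (n - k) * n.choose k) := by rw [← hpow, add_pow]
    _ ≤ ∑ k ∈ Finset.range (n + 1), N (φ ^ k * ψ ^ (n - k) * n.choose k) :=
      Finset.le_sum_of_subadditive N hzero.le hadd _ _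
    _ ≤ ∑ k ∈ Finset.range (n + 1), M ^ n := Finset.sum_le_sum fun k hk => by
      rw [← pow_mul_pow_sub M (Finset.mem_range_succ_iff.1 hk)]
      exact (hterm n k).trans (mul_le_mul (pow_le_pow_left₀ (h0 φ) (le_max_left _ _) k)
        (pow_le_pow_left₀ (h0 ψ) (le_max_right _ _) _) (pow_nonneg (h0 ψ) _)
        (pow_nonneg ((h0 φ).trans (le_max_left _ _)) k))
    _ = (n + 1) * M ^ n := by simp

lemma norm_sub_le_max_apply_X_sub_C (hN : IsMultSeminorm N) (a a' : K) :
    ‖a - a'‖ ≤ max (N (X - C a)) (N (X - C a')) := by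
  have hmax := hN.add_le_max
  obtain ⟨-, -, -, hmul, -, hC⟩ := hN
  calc ‖a - a'‖ = N ((X - C a') + C (-1) * (X - C a)) := by
        rw [← hC]; congr 1; rw [map_sub, map_neg, map_one]; ring
    _ ≤ max (N (X - C a')) (N (C (-1) * (X - C a))) := hmax _ _
    _ = max (N (X - C a)) (N (X - C a')) := by
        rw [hmul, hC, norm_neg, norm_one, one_mul, max_comm]

end Seminorm

section Classification

variable {K : Type*} [NontriviallyNormedField K] [IsAlgClosed K] [IsUltrametricDist K]
  {N : K[X] → ℝ}

lemma apply_X_sub_C_le_of_closedBall_subset (hN : IsMultSeminorm N) {a a' : K} {r r' : ℝ}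
    (hr : 0 ≤ r) (hsub : closedBall a r ⊆ closedBall a' r') (h : N (X - C a) ≤ r) :
    N (X - C a') ≤ r' := by
  obtain ⟨hrr, ha⟩ := (closedBall_subset_closedBall_iff_of_isAlgClosed hr).1 hsub
  calc N (X - C a') = N ((X - C a) + C (a - a')) := by rw [map_sub]; ring_nf
    _ ≤ max (N (X - C a)) (N (C (a - a'))) := hN.add_le_max _ _
    _ ≤ r' := by rw [hN.2.2.2.2.2]; exact max_le (h.trans hrr) ha

lemma closedBall_mem_discsOf_iff (hN : IsMultSeminorm N) {a : K} {r : ℝ} (hr : 0 ≤ r) :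
    closedBall a r ∈ discsOf N ↔ N (X - C a) ≤ r :=
  ⟨fun ⟨_, _, hr', heq, h⟩ => apply_X_sub_C_le_of_closedBall_subset hN hr' heq.symm.subset h,
    fun h => ⟨a, r, hr, rfl, h⟩⟩

theorem isNestedCollection_discsOf (hN : IsMultSeminorm N) : IsNestedCollection (discsOf N) := by
  refine ⟨?_, ?_, ?_, ?_⟩
  · rintro _ ⟨a, r, hr, rfl, -⟩
    exact ⟨a, r, hr, rfl⟩
  · rintro _ ⟨a, r, hr, rfl, ha⟩ _ ⟨a', r', hr', rfl, ha'⟩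
    have hdist := (norm_sub_le_max_apply_X_sub_C hN a a').trans (max_le_max ha ha')
    rcases le_total r r' with h | h
    · exact .inl ((closedBall_subset_closedBall_iff_of_isAlgClosed hr).2
        ⟨h, hdist.trans (max_le h le_rfl)⟩)
    · refine .inr ((closedBall_subset_closedBall_iff_of_isAlgClosed hr').2
        ⟨h, ?_⟩)
      rw [norm_sub_rev]
      exact hdist.trans (max_le le_rfl h)
  · rintro _ ⟨a', r', hr', rfl⟩ ⟨_, ⟨a, r, hr, rfl, ha⟩, hsub⟩
    exact ⟨a', r', hr', rfl, apply_X_sub_C_le_of_closedBall_subset hN hr hsub ha⟩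
  · rintro Dseq hmem - ⟨a, r, hr, hint⟩
    refine hint ▸ ⟨a, r, hr, rfl, ?_⟩
    have hsub : closedBall a (N (X - C a)) ⊆ ⋂ n, Dseq n := Set.subset_iInter fun n => by
      obtain ⟨an, rn, hrn, hDn, hn⟩ := hmem n
      have ha : a ∈ closedBall an rn := hDn ▸ Set.mem_iInter.1 (hint ▸ mem_closedBall_self hr) n
      have hball := IsUltrametricDist.closedBall_eq_of_mem ha
      rw [hDn, hball]
      exact closedBall_subset_closedBall
        (apply_X_sub_C_le_of_closedBall_subset hN hrn hball.subset hn)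
    rw [hint] at hsub
    exact ((closedBall_subset_closedBall_iff_of_isAlgClosed (hN.1 _)).1 hsub).1

theorem discSeminorm_discsOf (hN : IsMultSeminorm N) : discSeminorm (discsOf N) = N := by
  have hℰ := isNestedCollection_discsOf hN
  have hne := discsOf_nonempty hN
  have hx := isMultSeminorm_discSeminorm hℰ.1 hℰ.2.1 hne
  have hlin (a : K) : discSeminorm (discsOf N) (X - C a) = N (X - C a) := by
    have key (r : ℝ) (hr : 0 ≤ r) : discSeminorm (discsOf N) (X - C a) ≤ r ↔ N (X - C a) ≤ r := by
      rw [← closedBall_mem_iff hℰ hne hr, closedBall_mem_discsOf_iff hN hr]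
    exact le_antisymm ((key _ (hN.1 _)).2 le_rfl) ((key _ (hx.1 _)).1 le_rfl)
  have hC (c : K) : discSeminorm (discsOf N) (C c) = N (C c) :=
    (hx.2.2.2.2.2 c).trans (hN.2.2.2.2.2 c).symm
  exact congrArg DFunLike.coe
    (monoidHom_ext_of_X_sub_C (F := hx.toMonoidHom) (G := hN.toMonoidHom) hC hlin)

end Classification

end Berkovich

theorem berkovich_classification_general {K : Type*} [NontriviallyNormedField K] [IsAlgClosed K]
    (hna : ∀ a b : K, ‖a + b‖ ≤ max ‖a‖ ‖b‖) :
    (∀ ℰ : Set (Set K), IsNestedCollection ℰ → ℰ.Nonempty →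
      IsMultSeminorm (discSeminorm ℰ)) ∧
    (∀ N : Polynomial K → ℝ, IsMultSeminorm N →
      ∃! ℰ : Set (Set K), (IsNestedCollection ℰ ∧ ℰ.Nonempty) ∧ N = discSeminorm ℰ) ∧
    (∀ ℰ ℰ' : Set (Set K), IsNestedCollection ℰ → ℰ.Nonempty →
      IsNestedCollection ℰ' → ℰ'.Nonempty →
      ((∀ φ : Polynomial K, discSeminorm ℰ φ ≤ discSeminorm ℰ' φ) ↔ ℰ' ⊆ ℰ)) := by
  have : IsUltrametricDist K := .isUltrametricDist_of_forall_norm_add_le_max_norm hna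
  refine ⟨fun ℰ hℰ hne => Berkovich.isMultSeminorm_discSeminorm hℰ.1 hℰ.2.1 hne,
    fun N hN => ⟨Berkovich.discsOf N, ⟨⟨Berkovich.isNestedCollection_discsOf hN,
      Berkovich.discsOf_nonempty hN⟩, (Berkovich.discSeminorm_discsOf hN).symm⟩, ?_⟩,
    fun ℰ ℰ' hℰ hne hℰ' hne' => Berkovich.discSeminorm_le_iff hℰ hne hℰ' hne'⟩
  rintro ℰ ⟨⟨hℰ, hne⟩, rfl⟩
  exact (Berkovich.discsOf_discSeminorm hℰ hne).symm

/-- **Berkovich's classification of the points of the Berkovich affine line.** Over a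
complete, algebraically closed, nontrivially valued non-Archimedean field `K`: the
formula `|φ|_{x_ℰ} = inf_{D ∈ ℰ} sup_{b ∈ D} |φ(b)|` defines a multiplicative seminorm
on `K[z]` extending the absolute value of `K` for every nonempty nested collection `ℰ`
of closed discs; conversely every such seminorm equals `x_ℰ` for a unique nonempty
nested collection `ℰ`; and the bijection `ℰ ↦ x_ℰ` reverses order. -/
theorem berkovich_classification {K : Type*} [NontriviallyNormedField K] [IsAlgClosed K]
    [CompleteSpace K] (hna : ∀ a b : K, ‖a + b‖ ≤ max ‖a‖ ‖b‖) :
    (∀ ℰ : Set (Set K), IsNestedCollection ℰ → ℰ.Nonempty →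
      IsMultSeminorm (discSeminorm ℰ)) ∧
    (∀ N : Polynomial K → ℝ, IsMultSeminorm N →
      ∃! ℰ : Set (Set K), (IsNestedCollection ℰ ∧ ℰ.Nonempty) ∧ N = discSeminorm ℰ) ∧
    (∀ ℰ ℰ' : Set (Set K), IsNestedCollection ℰ → ℰ.Nonempty →
      IsNestedCollection ℰ' → ℰ'.Nonempty →
      ((∀ φ : Polynomial K, discSeminorm ℰ φ ≤ discSeminorm ℰ' φ) ↔ ℰ' ⊆ ℰ)) :=
  berkovich_classification_general hna
end

section
/- Classification of the Berkovich affine line over a trivially valued field. Let K be an algebraically closed field. Then every semivaluation v on K[z] that is trivial on K is of exactly one of the following forms: (1) the trivial valuation (v(φ) = 0 for all nonzero φ); (2) v = triv_a for a unique a ∈ K; (3) v = t·ord_a for a unique a ∈ K and a unique real number t with 0 < t < ∞; (4) v = t·ord_∞ for a unique real number t with 0 < t < ∞, i.e. v(φ) = −t·deg φ. -/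
/-- A semivaluation on `K[z]`, trivial on `K`: a function `v : K[z] → ℝ ∪ {+∞}` with
`v(φψ) = v(φ)+v(ψ)`, `v(φ+ψ) ≥ min(v(φ),v(ψ))`, `v(λ) = 0` for `λ ∈ K^×`, `v(0) = +∞`. -/
def IsSemivalPoly {K : Type*} [Field K] (v : Polynomial K → EReal) : Prop :=
  (∀ φ, v φ ≠ ⊥) ∧
  (∀ φ ψ, v (φ * ψ) = v φ + v ψ) ∧
  (∀ φ ψ, min (v φ) (v ψ) ≤ v (φ + ψ)) ∧
  (∀ c : K, c ≠ 0 → v (Polynomial.C c) = 0) ∧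
  v 0 = ⊤

open Classical in
/-- The semivaluation `triv_a`: `triv_a(φ) = +∞` if `φ(a) = 0` and `triv_a(φ) = 0`
otherwise. -/
noncomputable def trivVal {K : Type*} [Field K] (a : K) : Polynomial K → EReal :=
  fun φ => if Polynomial.eval a φ = 0 then (⊤ : EReal) else 0

/-- `v = t·ord_a`: `v(φ)` equals `t` times the order of vanishing of `φ` at `a`,
for all `φ ≠ 0`, where `t > 0`. -/
def IsOrdAt {K : Type*} [Field K] (v : Polynomial K → EReal) (a : K) (t : ℝ) : Prop :=
  0 < t ∧ ∀ φ : Polynomial K, φ ≠ 0 →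
    v φ = ((t * (Polynomial.rootMultiplicity a φ : ℝ) : ℝ) : EReal)

/-- `v = t·ord_∞`: `v(φ) = −t·deg φ` for all `φ ≠ 0`, where `t > 0`. -/
def IsOrdAtInfty {K : Type*} [Field K] (v : Polynomial K → EReal) (t : ℝ) : Prop :=
  0 < t ∧ ∀ φ : Polynomial K, φ ≠ 0 →
    v φ = ((-(t * (φ.natDegree : ℝ)) : ℝ) : EReal)


open Polynomial
open Classical

-- multiset sum lemmas
lemma bk_coeSum {K : Type*} (g : K → ℝ) (s : Multiset K) :
    (s.map (fun a => ((g a : ℝ) : EReal))).sum = (((s.map g).sum : ℝ) : EReal) := by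
  induction s using Multiset.induction with
  | empty => simp
  | cons b s ih => simp [ih, EReal.coe_add]

lemma bk_sumIf {K : Type*} (a : K) (t : ℝ) (s : Multiset K) :
    (s.map (fun r => if r = a then t else 0)).sum = t * (s.count a : ℝ) := by
  induction s using Multiset.induction with
  | empty => simp
  | cons b s ih =>
    by_cases hb : b = a
    · subst hb
      rw [Multiset.map_cons, Multiset.sum_cons, if_pos rfl, ih,
        Multiset.count_cons_self]
      push_cast; ring
    · rw [Multiset.map_cons, Multiset.sum_cons, if_neg hb, ih,
        Multiset.count_cons_of_ne (Ne.symm hb), zero_add]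

lemma bk_val_X_sub_C_ordAt {K : Type*} [Field K] (v : Polynomial K → EReal) (a b : K) (t : ℝ)
    (h : IsOrdAt v a t) : v (X - C b) = ((t * (if b = a then (1:ℝ) else 0)) : ℝ) := by
  rw [h.2 (X - C b) (X_sub_C_ne_zero b)]
  by_cases hb : b = a
  · subst hb; rw [rootMultiplicity_X_sub_C_self]; norm_num
  · rw [rootMultiplicity_eq_zero (by simp [IsRoot, sub_eq_zero, Ne.symm hb])]
    norm_num [hb]

lemma bk_trivVal_X_sub_C {K : Type*} [Field K] (a b : K) :
    trivVal a (X - C b) = if a = b then (⊤ : EReal) else 0 := by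
  have he : Polynomial.eval a (X - C b) = a - b := by simp
  unfold trivVal
  rw [he]
  by_cases h : a = b
  · rw [if_pos (by rw [h, sub_self]), if_pos h]
  · rw [if_neg (sub_ne_zero.mpr h), if_neg h]

lemma bk_triv_ne {K : Type*} [Field K] (v : Polynomial K → EReal) (a : K)
    (h : v = trivVal a) (h2 : ∀ φ : Polynomial K, φ ≠ 0 → v φ = 0) : False := by
  have := h2 (X - C a) (X_sub_C_ne_zero a)
  rw [h, bk_trivVal_X_sub_C, if_pos rfl] at this
  exact (by simp : (⊤ : EReal) ≠ 0) this

lemma bk_ord_ne {K : Type*} [Field K] (v : Polynomial K → EReal) (a : K) (t : ℝ)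
    (h : IsOrdAt v a t) (h2 : ∀ φ : Polynomial K, φ ≠ 0 → v φ = 0) : False := by
  have h3 := bk_val_X_sub_C_ordAt v a a t h
  rw [h2 (X - C a) (X_sub_C_ne_zero a), if_pos rfl, mul_one] at h3
  have ht : (0:ℝ) = t := by exact_mod_cast h3
  exact absurd h.1 (by rw [← ht]; exact lt_irrefl 0)

lemma bk_inf_ne {K : Type*} [Field K] (v : Polynomial K → EReal) (t : ℝ)
    (h : IsOrdAtInfty v t) (h2 : ∀ φ : Polynomial K, φ ≠ 0 → v φ = 0) : False := by
  have h3 := h.2 X X_ne_zero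
  rw [h2 X X_ne_zero, natDegree_X] at h3
  have ht : (0:ℝ) = -(t * ((1:ℕ):ℝ)) := by exact_mod_cast h3
  have := h.1; push_cast at ht; linarith

lemma bk_triv_ord {K : Type*} [Field K] (v : Polynomial K → EReal) (a b : K) (t : ℝ)
    (h : v = trivVal a) (h2 : IsOrdAt v b t) : False := by
  have h3 := h2.2 (X - C a) (X_sub_C_ne_zero a)
  rw [h, bk_trivVal_X_sub_C, if_pos rfl] at h3
  exact EReal.coe_ne_top _ h3.symm

lemma bk_triv_inf {K : Type*} [Field K] (v : Polynomial K → EReal) (a : K) (t : ℝ)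
    (h : v = trivVal a) (h2 : IsOrdAtInfty v t) : False := by
  have h3 := h2.2 (X - C a) (X_sub_C_ne_zero a)
  rw [h, bk_trivVal_X_sub_C, if_pos rfl] at h3
  exact EReal.coe_ne_top _ h3.symm

lemma bk_ord_inf {K : Type*} [Field K] (v : Polynomial K → EReal) (a : K) (t t' : ℝ)
    (h : IsOrdAt v a t) (h2 : IsOrdAtInfty v t') : False := by
  have h3 := bk_val_X_sub_C_ordAt v a a t h
  rw [h2.2 (X - C a) (X_sub_C_ne_zero a), natDegree_X_sub_C, if_pos rfl] at h3
  have h4 : -(t' * ((1:ℕ):ℝ)) = t * 1 := by exact_mod_cast h3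
  have := h.1; have := h2.1; push_cast at h4; linarith

lemma bk_u_triv {K : Type*} [Field K] (v : Polynomial K → EReal) (a a' : K)
    (h : v = trivVal a) (h' : v = trivVal a') : a = a' := by
  by_contra hne
  have h3 := congrFun (h.symm.trans h') (X - C a)
  rw [bk_trivVal_X_sub_C, bk_trivVal_X_sub_C, if_pos rfl, if_neg (fun hh => hne hh.symm)] at h3
  exact (by simp : (⊤ : EReal) ≠ 0) h3

lemma bk_u_ord {K : Type*} [Field K] (v : Polynomial K → EReal) (a a' : K) (t t' : ℝ)
    (h : IsOrdAt v a t) (h' : IsOrdAt v a' t') : a = a' ∧ t = t' := by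
  have h1 := bk_val_X_sub_C_ordAt v a a t h
  have h2 := bk_val_X_sub_C_ordAt v a' a t' h'
  rw [h1, if_pos rfl, mul_one] at h2
  have heq : t = t' * (if a = a' then (1:ℝ) else 0) := by exact_mod_cast h2
  by_cases ha : a = a'
  · rw [if_pos ha, mul_one] at heq; exact ⟨ha, heq⟩
  · rw [if_neg ha, mul_zero] at heq; exact absurd h.1 (by rw [heq]; exact lt_irrefl 0)

lemma bk_u_inf {K : Type*} [Field K] (v : Polynomial K → EReal) (t t' : ℝ)
    (h : IsOrdAtInfty v t) (h' : IsOrdAtInfty v t') : t = t' := by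
  have h1 := h.2 X X_ne_zero
  have h2 := h'.2 X X_ne_zero
  rw [h1] at h2
  have h3 : -(t * ((X : Polynomial K).natDegree:ℝ)) = -(t' * ((X : Polynomial K).natDegree:ℝ)) := by
    exact_mod_cast h2
  rw [natDegree_X] at h3; push_cast at h3; linarith

lemma bk_vC_mul {K : Type*} [Field K] (v : Polynomial K → EReal) (hv : IsSemivalPoly v)
    (c : K) (hc : c ≠ 0) (φ : Polynomial K) : v (C c * φ) = v φ := by
  rw [hv.2.1, hv.2.2.2.1 c hc, zero_add]

lemma bk_vneg {K : Type*} [Field K] (v : Polynomial K → EReal) (hv : IsSemivalPoly v)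
    (φ : Polynomial K) : v (-φ) = v φ := by
  have h1 : (-φ) = C (-1 : K) * φ := by rw [map_neg, map_one]; ring
  rw [h1, bk_vC_mul v hv _ (neg_ne_zero.mpr one_ne_zero)]

lemma bk_vprod {K : Type*} [Field K] (v : Polynomial K → EReal) (hv : IsSemivalPoly v)
    (s : Multiset K) :
    v ((s.map fun a => X - C a).prod) = (s.map fun a => v (X - C a)).sum := by
  induction s using Multiset.induction with
  | empty => simpa using hv.2.2.2.1 1 one_ne_zero
  | cons b s ih =>
      rw [Multiset.map_cons, Multiset.prod_cons, hv.2.1, ih, Multiset.map_cons,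
        Multiset.sum_cons]

lemma bk_vsum {K : Type*} [Field K] [IsAlgClosed K] (v : Polynomial K → EReal)
    (hv : IsSemivalPoly v) (φ : Polynomial K) (h : φ ≠ 0) :
    v φ = (φ.roots.map fun a => v (X - C a)).sum := by
  have hlc : φ.leadingCoeff ≠ 0 := leadingCoeff_ne_zero.mpr h
  conv_lhs => rw [← C_leadingCoeff_mul_prod_multiset_X_sub_C
    ((splits_iff_card_roots).mp (IsAlgClosed.splits φ))]
  rw [bk_vC_mul v hv _ hlc, bk_vprod v hv]

lemma bk_min1 {K : Type*} [Field K] (v : Polynomial K → EReal) (hv : IsSemivalPoly v)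
    (a b : K) (hab : a ≠ b) : min (v (X - C a)) 0 ≤ v (X - C b) := by
  have h1 : X - C b = (X - C a) + C (a - b) := by rw [map_sub]; ring
  have h2 := hv.2.2.1 (X - C a) (C (a - b))
  rw [hv.2.2.2.1 (a - b) (sub_ne_zero.mpr hab), ← h1] at h2
  exact h2

lemma bk_min2 {K : Type*} [Field K] (v : Polynomial K → EReal) (hv : IsSemivalPoly v)
    (a b : K) (hab : a ≠ b) : min (v (X - C a)) (v (X - C b)) ≤ 0 := by
  have h1 : C (a - b) = (X - C b) + (-(X - C a)) := by rw [map_sub]; ring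
  have h2 := hv.2.2.1 (X - C b) (-(X - C a))
  rw [← h1, hv.2.2.2.1 (a - b) (sub_ne_zero.mpr hab), bk_vneg v hv] at h2
  rw [min_comm]; exact h2

lemma bk_case_inf {K : Type*} [Field K] [IsAlgClosed K] (v : Polynomial K → EReal)
    (hv : IsSemivalPoly v) (a : K) (ha : v (X - C a) < 0) : ∃ t, IsOrdAtInfty v t := by
  set s : ℝ := (v (X - C a)).toReal with hsdef
  have hne_top : v (X - C a) ≠ ⊤ := (lt_of_lt_of_le ha le_top).ne
  have hco : v (X - C a) = (s : EReal) := (EReal.coe_toReal hne_top (hv.1 _)).symm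
  have hs : s < 0 := by rw [hco] at ha; exact_mod_cast ha
  have hall : ∀ b, v (X - C b) = (s : EReal) := by
    intro b
    by_cases hb : b = a
    · rw [hb, hco]
    · have hblt : v (X - C b) < 0 := by
        by_contra hge
        push_neg at hge
        have h2 := bk_min1 v hv b a hb
        rw [min_eq_right hge] at h2
        exact absurd (lt_of_le_of_lt h2 ha) (lt_irrefl 0)
      have h1 := bk_min1 v hv a b (Ne.symm hb)
      rw [min_eq_left ha.le] at h1
      have h2 := bk_min1 v hv b a hb
      rw [min_eq_left hblt.le] at h2
      rw [le_antisymm h2 h1, hco]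
  refine ⟨-s, by linarith, fun φ h => ?_⟩
  have hmap : (φ.roots.map fun r => v (X - C r)) =
      φ.roots.map (fun _ => ((s : ℝ) : EReal)) :=
    Multiset.map_congr rfl (fun r _ => hall r)
  rw [bk_vsum v hv φ h, hmap, bk_coeSum (fun _ => s)]
  have hcard : Multiset.card φ.roots = φ.natDegree :=
    splits_iff_card_roots.mp (IsAlgClosed.splits φ)
  rw [Multiset.map_const', Multiset.sum_replicate]
  congr 1
  rw [nsmul_eq_mul, hcard]
  push_cast; ring

lemma bk_case_ord {K : Type*} [Field K] [IsAlgClosed K] (v : Polynomial K → EReal)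
    (hv : IsSemivalPoly v) (a : K) (hz : ∀ b, b ≠ a → v (X - C b) = 0) (t : ℝ)
    (ht : 0 < t) (hco : v (X - C a) = (t : EReal)) : IsOrdAt v a t := by
  refine ⟨ht, fun φ h => ?_⟩
  have hmap : (φ.roots.map fun r => v (X - C r)) =
      φ.roots.map (fun r => (((if r = a then t else 0 : ℝ)) : EReal)) := by
    refine Multiset.map_congr rfl (fun r _ => ?_)
    by_cases hr : r = a
    · rw [hr, hco, if_pos rfl]
    · rw [hz r hr, if_neg hr]; norm_num
  rw [bk_vsum v hv φ h, hmap, bk_coeSum, bk_sumIf, count_roots]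

lemma bk_case_triv {K : Type*} [Field K] [IsAlgClosed K] (v : Polynomial K → EReal)
    (hv : IsSemivalPoly v) (a : K) (hz : ∀ b, b ≠ a → v (X - C b) = 0)
    (htop : v (X - C a) = ⊤) : v = trivVal a := by
  funext φ
  by_cases h : φ = 0
  · subst h; rw [hv.2.2.2.2]; unfold trivVal; rw [if_pos (by simp)]
  · rw [bk_vsum v hv φ h]
    by_cases heval : Polynomial.eval a φ = 0
    · have ha : a ∈ φ.roots := by rw [mem_roots h]; exact heval
      have hnn : ∀ x ∈ φ.roots.map (fun r => v (X - C r)), (0 : EReal) ≤ x := by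
        intro x hx
        obtain ⟨r, hr, rfl⟩ := Multiset.mem_map.mp hx
        by_cases hra : r = a
        · rw [hra, htop]; exact le_top
        · rw [hz r hra]
      have hle : (⊤ : EReal) ≤ (φ.roots.map fun r => v (X - C r)).sum := by
        rw [← htop]
        exact Multiset.single_le_sum hnn _ (Multiset.mem_map_of_mem _ ha)
      rw [top_le_iff.mp hle]; unfold trivVal; rw [if_pos heval]
    · have hmap : (φ.roots.map fun r => v (X - C r)) =
          φ.roots.map (fun _ => (0 : EReal)) := by
        refine Multiset.map_congr rfl (fun r hr => ?_)
        have hra : r ≠ a := by rintro rfl; exact heval ((mem_roots h).mp hr)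
        exact hz r hra
      rw [hmap, Multiset.sum_map_zero]; unfold trivVal; rw [if_neg heval]

/-- **Classification of the Berkovich affine line over a trivially valued field.**
Every semivaluation on `K[z]` trivial on `K` is of exactly one of the forms:
(1) the trivial valuation; (2) `triv_a` for a unique `a ∈ K`; (3) `t·ord_a` for a
unique `a ∈ K` and unique `0 < t < ∞`; (4) `t·ord_∞` for a unique `0 < t < ∞`. -/
theorem berkovich_line_trivially_valued_classification {K : Type*} [Field K] [IsAlgClosed K]
    (v : Polynomial K → EReal) (hv : IsSemivalPoly v) :
    (((∀ φ : Polynomial K, φ ≠ 0 → v φ = 0) ∧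
        ¬(∃ a : K, v = trivVal a) ∧ ¬(∃ (a : K) (t : ℝ), IsOrdAt v a t) ∧
        ¬(∃ t : ℝ, IsOrdAtInfty v t)) ∨
      (¬(∀ φ : Polynomial K, φ ≠ 0 → v φ = 0) ∧
        (∃ a : K, v = trivVal a) ∧ ¬(∃ (a : K) (t : ℝ), IsOrdAt v a t) ∧
        ¬(∃ t : ℝ, IsOrdAtInfty v t)) ∨
      (¬(∀ φ : Polynomial K, φ ≠ 0 → v φ = 0) ∧
        ¬(∃ a : K, v = trivVal a) ∧ (∃ (a : K) (t : ℝ), IsOrdAt v a t) ∧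
        ¬(∃ t : ℝ, IsOrdAtInfty v t)) ∨
      (¬(∀ φ : Polynomial K, φ ≠ 0 → v φ = 0) ∧
        ¬(∃ a : K, v = trivVal a) ∧ ¬(∃ (a : K) (t : ℝ), IsOrdAt v a t) ∧
        (∃ t : ℝ, IsOrdAtInfty v t))) ∧
    (∀ a a' : K, v = trivVal a → v = trivVal a' → a = a') ∧
    (∀ (a a' : K) (t t' : ℝ), IsOrdAt v a t → IsOrdAt v a' t' → a = a' ∧ t = t') ∧
    (∀ t t' : ℝ, IsOrdAtInfty v t → IsOrdAtInfty v t' → t = t') := by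

  refine ⟨?_, fun a a' h h' => bk_u_triv v a a' h h',
    fun a a' t t' h h' => bk_u_ord v a a' t t' h h',
    fun t t' h h' => bk_u_inf v t t' h h'⟩
  by_cases hneg : ∃ a : K, v (X - C a) < 0
  · obtain ⟨a, ha⟩ := hneg
    obtain ⟨t, hinf⟩ := bk_case_inf v hv a ha
    exact Or.inr (Or.inr (Or.inr ⟨fun h => bk_inf_ne v t hinf h,
      fun ⟨b, h⟩ => bk_triv_inf v b t h hinf,
      fun ⟨b, s, h⟩ => bk_ord_inf v b s t h hinf, ⟨t, hinf⟩⟩))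
  · push_neg at hneg
    by_cases hpos : ∃ a : K, 0 < v (X - C a)
    · obtain ⟨a, ha⟩ := hpos
      have hz : ∀ b, b ≠ a → v (X - C b) = 0 := by
        intro b hb
        refine le_antisymm ?_ (hneg b)
        by_contra hgt
        push_neg at hgt
        exact absurd (lt_of_lt_of_le (lt_min ha hgt) (bk_min2 v hv a b (Ne.symm hb)))
          (lt_irrefl 0)
      by_cases htop : v (X - C a) = ⊤
      · have htriv := bk_case_triv v hv a hz htop
        exact Or.inr (Or.inl ⟨fun h => bk_triv_ne v a htriv h, ⟨a, htriv⟩,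
          fun ⟨b, s, h⟩ => bk_triv_ord v a b s htriv h,
          fun ⟨s, h⟩ => bk_triv_inf v a s htriv h⟩)
      · set t : ℝ := (v (X - C a)).toReal with htdef
        have hco : v (X - C a) = (t : EReal) := (EReal.coe_toReal htop (hv.1 _)).symm
        have hpt : 0 < t := by rw [hco] at ha; exact_mod_cast ha
        have hord := bk_case_ord v hv a hz t hpt hco
        exact Or.inr (Or.inr (Or.inl ⟨fun h => bk_ord_ne v a t hord h,
          fun ⟨b, h⟩ => bk_triv_ord v b a t h hord, ⟨a, t, hord⟩,
          fun ⟨s, h⟩ => bk_ord_inf v a t s hord h⟩))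
    · push_neg at hpos
      have hz : ∀ φ : Polynomial K, φ ≠ 0 → v φ = 0 := by
        intro φ h
        have hmap : (φ.roots.map fun r => v (X - C r)) =
            φ.roots.map (fun _ => (0 : EReal)) :=
          Multiset.map_congr rfl (fun r _ => le_antisymm (hpos r) (hneg r))
        rw [bk_vsum v hv φ h, hmap, Multiset.sum_map_zero]
      exact Or.inl ⟨hz, fun ⟨a, h⟩ => bk_triv_ne v a h hz,
        fun ⟨a, t, h⟩ => bk_ord_ne v a t h hz,
        fun ⟨t, h⟩ => bk_inf_ne v t h hz⟩
end

section
/- Totally ramified points. Let K be an algebraically closed field and let F : P¹(K) → P¹(K) be a rational map of degree d > 1. Then exactly one of the following holds: either F is bijective and F is totally ramified at every point of P¹(K), or F is not bijective and there are at most two points of P¹(K) at which F is totally ramified. -/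
/-- The lift to `K²` of the rational map `[x:y] ↦ [P(x,y) : Q(x,y)]` of `P¹(K)`. -/
noncomputable def projLift {K : Type*} [Field K] (P Q : MvPolynomial (Fin 2) K)
    (v : Fin 2 → K) : Fin 2 → K :=
  ![MvPolynomial.eval v P, MvPolynomial.eval v Q]

/-- The rational map `F : P¹(K) → P¹(K)`, `F([x:y]) = [P(x,y) : Q(x,y)]`, induced by a
pair of homogeneous polynomials with no common zero away from the origin. -/
noncomputable def projMap {K : Type*} [Field K] (P Q : MvPolynomial (Fin 2) K)
    (hPQ : ∀ v : Fin 2 → K, v ≠ 0 → projLift P Q v ≠ 0) :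
    Projectivization K (Fin 2 → K) → Projectivization K (Fin 2 → K) :=
  fun ξ => Projectivization.mk K (projLift P Q ξ.rep) (hPQ ξ.rep ξ.rep_nonzero)

/-!
If `F` is totally ramified at `[v₀]`, the binary form `v ↦ det (F̃ v₀, F̃ v)` of degree `d`
vanishes only on the line `K ∙ v₀`, so over an algebraically closed field it equals
`c • det (v₀, v) ^ d`. For three distinct totally ramified points, the linear relation
between the three vectors `F̃ vᵢ` (Cramer's rule) turns these identities into
`a x ^ d + b y ^ d + c (x + y) ^ d = 0` for all `x, y`, which forces `x ↦ x ^ d` to be additive,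
hence an automorphism of `K`. Then `F̃` is a linear isomorphism composed coordinatewise with this
automorphism, so `F` is bijective; and a bijective map is totally ramified everywhere.
-/

open MvPolynomial

namespace MvPolynomial.IsHomogeneous

variable {σ R : Type*} [CommSemiring R] {φ : MvPolynomial σ R} {n : ℕ}

theorem eval_smul (hφ : φ.IsHomogeneous n) (c : R) (v : σ → R) :
    eval (c • v) φ = c ^ n * eval v φ := by
  simp only [eval_eq, Finset.mul_sum]
  refine Finset.sum_congr rfl fun s hs => ?_
  simp only [Pi.smul_apply, smul_eq_mul, mul_pow, Finset.prod_mul_distrib,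
    Finset.prod_pow_eq_pow_sum, ← hφ.degree_eq_sum_deg_support hs]
  ring

end MvPolynomial.IsHomogeneous

theorem MvPolynomial.eval_polynomial_aeval {K σ : Type*} [CommSemiring K] (φ : MvPolynomial σ K)
    (w : σ → Polynomial K) (t : K) :
    (aeval w φ).eval t = eval (fun i => (w i).eval t) φ := by
  induction φ using MvPolynomial.induction_on with
  | C a => simp
  | add p q hp hq => simp [hp, hq]
  | mul_X p i hp => simp [hp]

theorem Polynomial.eq_C_of_forall_eval_ne_zero {K : Type*} [Field K] [IsAlgClosed K]
    {p : Polynomial K} (hp : ∀ t, p.eval t ≠ 0) : p = C (p.coeff 0) :=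
  IsAlgClosed.roots_eq_zero_iff.mp <| Multiset.eq_zero_of_forall_notMem fun t ht =>
    hp t (Polynomial.mem_roots'.mp ht).2

theorem add_pow_eq_of_forall_eq_zero {R : Type*} [CommRing R] [IsDomain R] {d : ℕ} (hd : d ≠ 0)
    {a b c : R} (hc : c ≠ 0) (h : ∀ x y, a * x ^ d + b * y ^ d + c * (x + y) ^ d = 0) (x y : R) :
    (x + y) ^ d = x ^ d + y ^ d := by
  have h₁ := h 1 0
  have h₂ := h 0 1
  simp only [one_pow, zero_pow hd, mul_one, mul_zero, add_zero, zero_add] at h₁ h₂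
  exact mul_left_cancel₀ hc (by linear_combination h x y - x ^ d * h₁ - y ^ d * h₂)

theorem pow_bijective_of_add_pow {K : Type*} [Field K] [IsAlgClosed K] {d : ℕ} (hd : d ≠ 0)
    (hadd : ∀ x y : K, (x + y) ^ d = x ^ d + y ^ d) : Function.Bijective fun x : K => x ^ d :=
  ⟨({ powMonoidHom d with map_zero' := zero_pow hd, map_add' := hadd } : K →+* K).injective,
    fun x => IsAlgClosed.exists_pow_nat_eq x (Nat.pos_of_ne_zero hd)⟩

section Wedge

variable {K : Type*} [Field K] {d : ℕ}

def wedge (a b : Fin 2 → K) : K := a 0 * b 1 - a 1 * b 0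

@[simp] theorem wedge_self (a : Fin 2 → K) : wedge a a = 0 := by
  simp [wedge, mul_comm]

theorem wedge_comm (a b : Fin 2 → K) : wedge a b = -wedge b a := by
  simp only [wedge]; ring

@[simp] theorem wedge_add (a b c : Fin 2 → K) : wedge a (b + c) = wedge a b + wedge a c := by
  simp only [wedge, Pi.add_apply]; ring

@[simp] theorem wedge_smul (a b : Fin 2 → K) (c : K) : wedge a (c • b) = c * wedge a b := by
  simp only [wedge, Pi.smul_apply, smul_eq_mul]; ring

@[simp] theorem wedge_sub (a b c : Fin 2 → K) : wedge a (b - c) = wedge a b - wedge a c := by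
  simp only [wedge, Pi.sub_apply]; ring

/-- Cramer's rule in dimension two. -/
theorem wedge_smul_add_wedge_smul_add_wedge_smul (a b c : Fin 2 → K) :
    wedge b c • a + wedge c a • b + wedge a b • c = 0 := by
  ext i; fin_cases i <;> simp [wedge] <;> ring

theorem wedge_mul_add_wedge_mul_add_wedge_mul (a b c v : Fin 2 → K) :
    wedge b c * wedge a v + wedge c a * wedge b v + wedge a b * wedge c v = 0 := by
  simp only [wedge]; ring

theorem exists_wedge_ne_zero {a : Fin 2 → K} (ha : a ≠ 0) : ∃ u, wedge a u ≠ 0 := by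
  by_contra! h
  refine ha (funext fun i => ?_)
  fin_cases i
  · simpa [wedge] using h (Pi.single 1 1)
  · simpa [wedge] using h (Pi.single 0 1)

theorem exists_eq_smul_of_wedge_eq_zero {a b : Fin 2 → K} (ha : a ≠ 0) (h : wedge a b = 0) :
    ∃ c : K, b = c • a := by
  obtain ⟨u, hu⟩ := exists_wedge_ne_zero ha
  refine ⟨-wedge u b / wedge a u, smul_right_injective _ hu ?_⟩
  have := wedge_smul_add_wedge_smul_add_wedge_smul a u b
  rw [wedge_comm b a, h, neg_zero, zero_smul, add_zero] at this
  simp only [smul_smul, mul_div_cancel₀ _ hu]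
  linear_combination (norm := module) this

theorem eq_of_wedge_eq_of_wedge_eq {a b v w : Fin 2 → K} (hab : wedge a b ≠ 0)
    (ha : wedge a v = wedge a w) (hb : wedge b v = wedge b w) : v = w := by
  have hv := wedge_smul_add_wedge_smul_add_wedge_smul a b v
  have hw := wedge_smul_add_wedge_smul_add_wedge_smul a b w
  rw [wedge_comm v a, ha, hb] at hv
  rw [wedge_comm w a] at hw
  exact smul_right_injective _ hab (by linear_combination (norm := module) hv - hw)

theorem exists_wedge_eq_of_wedge_eq {a b : Fin 2 → K} (hab : wedge a b ≠ 0) (x y : K) :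
    ∃ v, wedge a v = x ∧ wedge b v = y := by
  refine ⟨(x / wedge a b) • b - (y / wedge a b) • a, ?_, ?_⟩ <;>
    simp [wedge_comm b a, div_mul_cancel₀ _ hab]

theorem MvPolynomial.IsHomogeneous.exists_eval_eq_mul_wedge_pow [IsAlgClosed K]
    {R : MvPolynomial (Fin 2) K} (hR : R.IsHomogeneous d) (hd : d ≠ 0)
    {v₀ : Fin 2 → K} (hv₀ : v₀ ≠ 0) (h₀ : eval v₀ R = 0)
    (hzero : ∀ v, eval v R = 0 → wedge v₀ v = 0) :
    ∃ c ≠ 0, ∀ v, eval v R = c * wedge v₀ v ^ d := by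
  obtain ⟨u, hu⟩ := exists_wedge_ne_zero hv₀
  -- `R` on the affine line `t ↦ t • v₀ + u`, which misses the zeros of `R`, hence is constant
  let r : Polynomial K :=
    MvPolynomial.aeval (fun i => Polynomial.C (v₀ i) * Polynomial.X + Polynomial.C (u i)) R
  have hr : ∀ t, r.eval t = eval (t • v₀ + u) R := fun t => by
    simp only [r, eval_polynomial_aeval, Polynomial.eval_add, Polynomial.eval_mul,
      Polynomial.eval_C, Polynomial.eval_X]
    exact congrArg (eval · R) (by ext i; simp [mul_comm])
  have hr_ne : ∀ t, r.eval t ≠ 0 := fun t ht => hu (by simpa using hzero _ ((hr t).symm.trans ht))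
  set c₀ := r.coeff 0
  have hr_const : ∀ t, r.eval t = c₀ := fun t =>
    (congrArg (Polynomial.eval t) (Polynomial.eq_C_of_forall_eval_ne_zero hr_ne)).trans
      Polynomial.eval_C
  have hc₀ : c₀ ≠ 0 := hr_const 0 ▸ hr_ne 0
  refine ⟨c₀ / wedge v₀ u ^ d, div_ne_zero hc₀ (pow_ne_zero _ hu), fun v => ?_⟩
  have hcramer : wedge v₀ u • v = wedge v₀ v • u - wedge u v • v₀ := by
    have := wedge_smul_add_wedge_smul_add_wedge_smul v₀ u v
    rw [wedge_comm v v₀] at this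
    linear_combination (norm := module) this
  have key : wedge v₀ u ^ d * eval v R = wedge v₀ v ^ d * c₀ := by
    rw [← hR.eval_smul, hcramer]
    by_cases hw : wedge v₀ v = 0
    · rw [hw, zero_smul, zero_sub, ← neg_smul, hR.eval_smul, h₀, zero_pow hd]; ring
    · have : wedge v₀ v • u - wedge u v • v₀ =
          wedge v₀ v • ((-wedge u v / wedge v₀ v) • v₀ + u) := by
        rw [smul_add, smul_smul, mul_div_cancel₀ _ hw]; module
      rw [this, hR.eval_smul, ← hr, hr_const]
  field_simp
  linear_combination key

theorem mk_eq_mk_iff_wedge_eq_zero {a b : Fin 2 → K} (ha : a ≠ 0) (hb : b ≠ 0) :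
    Projectivization.mk K a ha = Projectivization.mk K b hb ↔ wedge a b = 0 := by
  rw [eq_comm, Projectivization.mk_eq_mk_iff']
  refine ⟨?_, fun h => (exists_eq_smul_of_wedge_eq_zero ha h).imp fun c hc => hc.symm⟩
  rintro ⟨c, rfl⟩
  simp

theorem wedge_rep_ne_zero {ξ η : Projectivization K (Fin 2 → K)} (h : ξ ≠ η) :
    wedge ξ.rep η.rep ≠ 0 := by
  rwa [Ne, ← mk_eq_mk_iff_wedge_eq_zero ξ.rep_nonzero η.rep_nonzero, Projectivization.mk_rep,
    Projectivization.mk_rep]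

theorem add_pow_eq_of_three_wedge_pow {G : (Fin 2 → K) → Fin 2 → K} {v₁ v₂ v₃ : Fin 2 → K}
    {c₁ c₂ c₃ : K} (hd : d ≠ 0) (h₁₂ : wedge v₁ v₂ ≠ 0) (h₂₃ : wedge v₂ v₃ ≠ 0)
    (h₃₁ : wedge v₃ v₁ ≠ 0) (hc₁ : c₁ ≠ 0) (hc₃ : c₃ ≠ 0)
    (hG₁ : ∀ v, wedge (G v₁) (G v) = c₁ * wedge v₁ v ^ d)
    (hG₂ : ∀ v, wedge (G v₂) (G v) = c₂ * wedge v₂ v ^ d)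
    (hG₃ : ∀ v, wedge (G v₃) (G v) = c₃ * wedge v₃ v ^ d) (x y : K) :
    (x + y) ^ d = x ^ d + y ^ d := by
  refine add_pow_eq_of_forall_eq_zero hd (a := c₁ * c₂) (b := c₂ * c₃) (c := (-1) ^ d * c₁ * c₃)
    (by simp [hc₁, hc₃]) (fun x y => ?_) x y
  -- Cramer's rule for the `G vᵢ`, paired with `G v`, relates the `(wedge vᵢ v) ^ d`; `v` is
  -- chosen so that Cramer's rule for the `vᵢ`, paired with `v`, reads `x + y + (-(x + y)) = 0`.
  obtain ⟨v, hv₁, hv₂⟩ := exists_wedge_eq_of_wedge_eq h₁₂ (x / wedge v₂ v₃) (y / wedge v₃ v₁)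
  have hx : wedge v₂ v₃ * wedge v₁ v = x := by rw [hv₁, mul_div_cancel₀ _ h₂₃]
  have hy : wedge v₃ v₁ * wedge v₂ v = y := by rw [hv₂, mul_div_cancel₀ _ h₃₁]
  have hz : wedge v₁ v₂ * wedge v₃ v = -(x + y) := by
    linear_combination wedge_mul_add_wedge_mul_add_wedge_mul v₁ v₂ v₃ v - hx - hy
  have hG := wedge_mul_add_wedge_mul_add_wedge_mul (G v₁) (G v₂) (G v₃) (G v)
  simp only [hG₁, hG₂, hG₃] at hG
  have key : c₁ * c₂ * (wedge v₂ v₃ * wedge v₁ v) ^ d + c₂ * c₃ * (wedge v₃ v₁ * wedge v₂ v) ^ d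
      + c₁ * c₃ * (wedge v₁ v₂ * wedge v₃ v) ^ d = 0 := by
    linear_combination hG
  rw [hx, hy, hz, neg_pow] at key
  linear_combination key

theorem bijective_of_wedge_eq_mul_pow {G : (Fin 2 → K) → Fin 2 → K} {a b p q : Fin 2 → K}
    {c₁ c₂ : K} (hab : wedge a b ≠ 0) (hpq : wedge p q ≠ 0) (hc₁ : c₁ ≠ 0) (hc₂ : c₂ ≠ 0)
    (hpow : Function.Bijective fun x : K => x ^ d)
    (hGa : ∀ v, wedge a (G v) = c₁ * wedge p v ^ d)
    (hGb : ∀ v, wedge b (G v) = c₂ * wedge q v ^ d) : Function.Bijective G := by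
  refine ⟨fun v w h => eq_of_wedge_eq_of_wedge_eq hpq ?_ ?_, fun u => ?_⟩
  · exact hpow.1 (mul_left_cancel₀ hc₁ (by rw [← hGa, ← hGa, h]))
  · exact hpow.1 (mul_left_cancel₀ hc₂ (by rw [← hGb, ← hGb, h]))
  obtain ⟨x, hx : x ^ d = wedge a u / c₁⟩ := hpow.2 (wedge a u / c₁)
  obtain ⟨y, hy : y ^ d = wedge b u / c₂⟩ := hpow.2 (wedge b u / c₂)
  obtain ⟨v, rfl, rfl⟩ := exists_wedge_eq_of_wedge_eq hpq x y
  refine ⟨v, eq_of_wedge_eq_of_wedge_eq hab ?_ ?_⟩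
  · rw [hGa, hx, mul_div_cancel₀ _ hc₁]
  · rw [hGb, hy, mul_div_cancel₀ _ hc₂]

end Wedge

section RationalMap

variable {K : Type*} [Field K] {d : ℕ} {P Q : MvPolynomial (Fin 2) K}

theorem projLift_smul (hP : P.IsHomogeneous d) (hQ : Q.IsHomogeneous d) (c : K)
    (v : Fin 2 → K) : projLift P Q (c • v) = c ^ d • projLift P Q v := by
  ext i; fin_cases i <;> simp [projLift, hP.eval_smul, hQ.eval_smul]

theorem projMap_mk (hP : P.IsHomogeneous d) (hQ : Q.IsHomogeneous d)
    (hPQ : ∀ v : Fin 2 → K, v ≠ 0 → projLift P Q v ≠ 0) (v : Fin 2 → K) (hv : v ≠ 0) :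
    projMap P Q hPQ (Projectivization.mk K v hv) =
      Projectivization.mk K (projLift P Q v) (hPQ v hv) := by
  obtain ⟨a, ha⟩ := Projectivization.exists_smul_eq_mk_rep K v hv
  refine (Projectivization.mk_eq_mk_iff' K _ _ _ _).2 ⟨(a : K) ^ d, ?_⟩
  rw [← projLift_smul hP hQ, ← ha, Units.smul_def]

theorem projMap_bijective_of_projLift_bijective [IsAlgClosed K] (hd : d ≠ 0)
    (hP : P.IsHomogeneous d) (hQ : Q.IsHomogeneous d)
    (hPQ : ∀ v : Fin 2 → K, v ≠ 0 → projLift P Q v ≠ 0) (h : Function.Bijective (projLift P Q)) :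
    Function.Bijective (projMap P Q hPQ) := by
  refine ⟨fun ξ η hξη => ?_, fun η => ?_⟩
  · induction ξ using Projectivization.ind with | h v hv => ?_
    induction η using Projectivization.ind with | h w hw => ?_
    rw [projMap_mk hP hQ, projMap_mk hP hQ, Projectivization.mk_eq_mk_iff'] at hξη
    obtain ⟨a, ha⟩ := hξη
    obtain ⟨z, rfl⟩ := IsAlgClosed.exists_pow_nat_eq a (Nat.pos_of_ne_zero hd)
    rw [← projLift_smul hP hQ] at ha
    exact (Projectivization.mk_eq_mk_iff' K _ _ _ _).2 ⟨z, h.1 ha⟩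
  · induction η using Projectivization.ind with | h u hu => ?_
    obtain ⟨v, rfl⟩ := h.2 u
    have hv : v ≠ 0 := by
      rintro rfl
      exact hu (by simpa [zero_pow hd] using projLift_smul hP hQ 0 0)
    exact ⟨Projectivization.mk K v hv, projMap_mk hP hQ hPQ v hv⟩

theorem exists_wedge_projLift_eq_mul_wedge_pow [IsAlgClosed K] (hd : d ≠ 0)
    (hP : P.IsHomogeneous d) (hQ : Q.IsHomogeneous d)
    (hPQ : ∀ v : Fin 2 → K, v ≠ 0 → projLift P Q v ≠ 0) {ξ : Projectivization K (Fin 2 → K)}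
    (hξ : projMap P Q hPQ ⁻¹' {projMap P Q hPQ ξ} = {ξ}) :
    ∃ c ≠ 0, ∀ v, wedge (projLift P Q ξ.rep) (projLift P Q v) = c * wedge ξ.rep v ^ d := by
  set w := projLift P Q ξ.rep
  have hR : (C (w 0) * Q - C (w 1) * P).IsHomogeneous d := by
    simpa using ((isHomogeneous_C _ (w 0)).mul hQ).sub ((isHomogeneous_C _ (w 1)).mul hP)
  have heval : ∀ v, eval v (C (w 0) * Q - C (w 1) * P) = wedge w (projLift P Q v) := fun v => by
    simp [wedge, projLift]
  simp only [← heval]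
  refine hR.exists_eval_eq_mul_wedge_pow hd ξ.rep_nonzero (by simp [heval, w]) fun v hRv => ?_
  by_cases hv : v = 0
  · simp [hv, wedge]
  have hfiber : Projectivization.mk K v hv = ξ := hξ.subset <| by
    rw [heval, ← mk_eq_mk_iff_wedge_eq_zero (hPQ _ ξ.rep_nonzero) (hPQ v hv)] at hRv
    rw [Set.mem_preimage, projMap_mk hP hQ, ← hRv]
    rfl
  rw [← mk_eq_mk_iff_wedge_eq_zero ξ.rep_nonzero hv, hfiber, Projectivization.mk_rep]

theorem projMap_bijective_of_three_totally_ramified [IsAlgClosed K] (hd : d ≠ 0)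
    (hP : P.IsHomogeneous d) (hQ : Q.IsHomogeneous d)
    (hPQ : ∀ v : Fin 2 → K, v ≠ 0 → projLift P Q v ≠ 0) {ξ₁ ξ₂ ξ₃ : Projectivization K (Fin 2 → K)}
    (h₁₂ : ξ₁ ≠ ξ₂) (h₂₃ : ξ₂ ≠ ξ₃) (h₃₁ : ξ₃ ≠ ξ₁)
    (hξ₁ : projMap P Q hPQ ⁻¹' {projMap P Q hPQ ξ₁} = {ξ₁})
    (hξ₂ : projMap P Q hPQ ⁻¹' {projMap P Q hPQ ξ₂} = {ξ₂})
    (hξ₃ : projMap P Q hPQ ⁻¹' {projMap P Q hPQ ξ₃} = {ξ₃}) :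
    Function.Bijective (projMap P Q hPQ) := by
  obtain ⟨c₁, hc₁, hG₁⟩ := exists_wedge_projLift_eq_mul_wedge_pow hd hP hQ hPQ hξ₁
  obtain ⟨c₂, hc₂, hG₂⟩ := exists_wedge_projLift_eq_mul_wedge_pow hd hP hQ hPQ hξ₂
  obtain ⟨c₃, hc₃, hG₃⟩ := exists_wedge_projLift_eq_mul_wedge_pow hd hP hQ hPQ hξ₃
  have hpow := pow_bijective_of_add_pow hd <| add_pow_eq_of_three_wedge_pow hd
    (wedge_rep_ne_zero h₁₂) (wedge_rep_ne_zero h₂₃) (wedge_rep_ne_zero h₃₁) hc₁ hc₃ hG₁ hG₂ hG₃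
  have hw₁₂ : wedge (projLift P Q ξ₁.rep) (projLift P Q ξ₂.rep) ≠ 0 := by
    rw [hG₁]; exact mul_ne_zero hc₁ (pow_ne_zero _ (wedge_rep_ne_zero h₁₂))
  exact projMap_bijective_of_projLift_bijective hd hP hQ hPQ <|
    bijective_of_wedge_eq_mul_pow hw₁₂ (wedge_rep_ne_zero h₁₂) hc₁ hc₂ hpow hG₁ hG₂

end RationalMap

/-- **Totally ramified points.** Let `F : P¹(K) → P¹(K)` be a rational map of degree
`d > 1` over an algebraically closed field. Then exactly one of the following holds:
either `F` is bijective and totally ramified at every point (i.e. `F⁻¹(F(ξ)) = {ξ}` for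
all `ξ`), or `F` is not bijective and is totally ramified at no more than two points. -/
theorem totally_ramified_points {K : Type*} [Field K] [IsAlgClosed K]
    (d : ℕ) (hd : 1 < d) (P Q : MvPolynomial (Fin 2) K)
    (hP : P.IsHomogeneous d) (hQ : Q.IsHomogeneous d)
    (hPQ : ∀ v : Fin 2 → K, v ≠ 0 → projLift P Q v ≠ 0) :
    Xor'
      (Function.Bijective (projMap P Q hPQ) ∧
        ∀ ξ : Projectivization K (Fin 2 → K),
          (projMap P Q hPQ) ⁻¹' {projMap P Q hPQ ξ} = {ξ})
      (¬ Function.Bijective (projMap P Q hPQ) ∧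
        {ξ : Projectivization K (Fin 2 → K) |
          (projMap P Q hPQ) ⁻¹' {projMap P Q hPQ ξ} = {ξ}}.encard ≤ 2) := by
  by_cases hbij : Function.Bijective (projMap P Q hPQ)
  · exact Or.inl ⟨⟨hbij, fun ξ => by ext η; simp [hbij.injective.eq_iff]⟩, fun h => h.1 hbij⟩
  refine Or.inr ⟨⟨hbij, ?_⟩, fun h => hbij h.1⟩
  by_contra! h
  obtain ⟨t, hts, ht⟩ := Set.exists_subset_encard_eq (Order.add_one_le_of_lt h)
  obtain ⟨ξ₁, ξ₂, ξ₃, h₁₂, h₁₃, h₂₃, rfl⟩ := Set.encard_eq_three.1 ht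
  exact hbij <| projMap_bijective_of_three_totally_ramified (by omega) hP hQ hPQ h₁₂ h₂₃
    h₁₃.symm (hts (by simp)) (hts (by simp)) (hts (by simp))
end

section
/- Let X and X′ be compact Hausdorff topological spaces such that every point of X admits a basis of connected open neighborhoods, and let f : X → X′ be a continuous, open, surjective map that is finite of topological degree at most d (every point of X′ has at most d preimages). Then: (i) if U ⊆ X is a connected open set, then f(U) is a connected open set and the boundary of f(U) is contained in f(∂U); (ii) if U′ ⊆ X′ is a connected open set and U is a connected component of f⁻¹(U′), then f(U) = U′ and f(∂U) = ∂U′; as a consequence, f⁻¹(U′) has at most d connected components. -/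
/-!
A continuous map from a compact space to a Hausdorff space is closed, so `f` is both open and
closed. For an open and closed map the closure of `f '' U` is `f '' closure U`, while `f` maps
interior points to interior points; this gives `∂ f(U) ⊆ f(∂U)`. A component `U` of `f⁻¹(U′)` is
open by local connectedness and closed in `f⁻¹(U′)`, so `f(U)` is open and closed in the
connected set `U′`, whence `f(U) = U′`. Consequently every component meets the fibre over a
fixed point of `U′`, and there are at most `d` of them.
-/

open Set

section OpenClosedMap

variable {X Y : Type*} [TopologicalSpace X] [TopologicalSpace Y] {f : X → Y}

theorem LocallyConnectedSpace.of_isOpen_isConnected_subset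
    (h : ∀ (x : X) (U : Set X), IsOpen U → x ∈ U →
      ∃ V : Set X, IsOpen V ∧ IsConnected V ∧ x ∈ V ∧ V ⊆ U) :
    LocallyConnectedSpace X := by
  refine locallyConnectedSpace_iff_subsets_isOpen_isConnected.2 fun x U hU => ?_
  obtain ⟨W, hWU, hWo, hxW⟩ := mem_nhds_iff.mp hU
  obtain ⟨V, hVo, hVc, hxV, hVW⟩ := h x W hWo hxW
  exact ⟨V, hVW.trans hWU, hVo, hxV, hVc⟩

theorem frontier_image_subset_of_isClosedMap_of_isOpenMap (hc : IsClosedMap f)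
    (ho : IsOpenMap f) (s : Set X) : frontier (f '' s) ⊆ f '' frontier s := by
  rintro _ ⟨hy_cl, hy_int⟩
  obtain ⟨x, hx, rfl⟩ := hc.closure_image_subset s hy_cl
  exact ⟨x, ⟨hx, fun hx_int => hy_int (ho.image_interior_subset s ⟨x, hx_int, rfl⟩)⟩, rfl⟩

theorem IsOpen.closure_connectedComponentIn_inter_subset [LocallyConnectedSpace X]
    {F : Set X} (hF : IsOpen F) (x : X) :
    closure (connectedComponentIn F x) ∩ F ⊆ connectedComponentIn F x := by
  rintro z ⟨hz_cl, hzF⟩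
  obtain ⟨w, hwz, hwx⟩ := mem_closure_iff.mp hz_cl _ hF.connectedComponentIn
    (mem_connectedComponentIn hzF)
  rw [connectedComponentIn_eq hwx, ← connectedComponentIn_eq hwz]
  exact mem_connectedComponentIn hzF

theorem encard_setOf_connectedComponentIn_le {F T : Set X}
    (h : ∀ x ∈ F, (connectedComponentIn F x ∩ T).Nonempty) :
    {C | ∃ x ∈ F, C = connectedComponentIn F x}.encard ≤ T.encard :=
  calc _ ≤ (connectedComponentIn F '' T).encard := by
        refine encard_le_encard ?_
        rintro _ ⟨x, hx, rfl⟩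
        obtain ⟨a, hax, haT⟩ := h x hx
        exact ⟨a, haT, (connectedComponentIn_eq hax).symm⟩
    _ ≤ T.encard := encard_image_le _ _

variable [LocallyConnectedSpace X] (hf : Continuous f) (hc : IsClosedMap f) (ho : IsOpenMap f)
  {U : Set Y} (hU : IsOpen U) (hUc : IsPreconnected U) {x : X} (hx : f x ∈ U)
include hf hc ho hU hUc hx

theorem image_connectedComponentIn_preimage :
    f '' connectedComponentIn (f ⁻¹' U) x = U := by
  have hFo : IsOpen (f ⁻¹' U) := hU.preimage hf
  refine (image_subset_iff.2 (connectedComponentIn_subset _ _)).antisymm ?_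
  refine hUc.subset_of_closure_inter_subset (ho _ hFo.connectedComponentIn)
    ⟨f x, hx, x, mem_connectedComponentIn hx, rfl⟩ ?_
  rintro _ ⟨hy_cl, hyU⟩
  obtain ⟨a, ha, rfl⟩ := hc.closure_image_subset _ hy_cl
  exact ⟨a, hFo.closure_connectedComponentIn_inter_subset x ⟨ha, hyU⟩, rfl⟩

theorem image_frontier_connectedComponentIn_preimage :
    f '' frontier (connectedComponentIn (f ⁻¹' U) x) = frontier U := by
  have hFo : IsOpen (f ⁻¹' U) := hU.preimage hf
  have himg := image_connectedComponentIn_preimage hf hc ho hU hUc hx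
  set C := connectedComponentIn (f ⁻¹' U) x
  refine Subset.antisymm ?_ (himg ▸ frontier_image_subset_of_isClosedMap_of_isOpenMap hc ho C)
  rintro _ ⟨a, ha, rfl⟩
  rw [hFo.connectedComponentIn.frontier_eq] at ha
  rw [hU.frontier_eq, ← himg]
  exact ⟨image_closure_subset_closure_image hf ⟨a, ha.1, rfl⟩, fun hfa =>
    ha.2 (hFo.closure_connectedComponentIn_inter_subset x ⟨ha.1, himg ▸ hfa⟩)⟩

end OpenClosedMap

theorem finite_open_map_properties_general {X X' : Type*}
    [TopologicalSpace X] [TopologicalSpace X']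
    [CompactSpace X] [T2Space X']
    (hloc : ∀ (x : X) (U : Set X), IsOpen U → x ∈ U →
      ∃ V : Set X, IsOpen V ∧ IsConnected V ∧ x ∈ V ∧ V ⊆ U)
    (f : X → X') (hf : Continuous f) (hopen : IsOpenMap f)
    (d : ℕ)
    (hfin : ∀ x' : X', (f ⁻¹' {x'}).encard ≤ (d : ℕ∞)) :
    (∀ U : Set X, IsOpen U → IsConnected U →
      IsOpen (f '' U) ∧ IsConnected (f '' U) ∧ frontier (f '' U) ⊆ f '' frontier U) ∧
    (∀ U' : Set X', IsOpen U' → IsConnected U' →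
      (∀ U : Set X, (∃ x ∈ f ⁻¹' U', U = connectedComponentIn (f ⁻¹' U') x) →
        f '' U = U' ∧ f '' frontier U = frontier U') ∧
      {C : Set X | ∃ x ∈ f ⁻¹' U', C = connectedComponentIn (f ⁻¹' U') x}.encard
        ≤ (d : ℕ∞)) := by
  have := LocallyConnectedSpace.of_isOpen_isConnected_subset hloc
  have hclosed : IsClosedMap f := hf.isClosedMap
  refine ⟨fun U hUo hUc => ⟨hopen U hUo, hUc.image f hf.continuousOn,
    frontier_image_subset_of_isClosedMap_of_isOpenMap hclosed hopen U⟩, fun U' hU'o hU'c => ?_⟩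
  have himg {x : X} (hx : f x ∈ U') := image_connectedComponentIn_preimage hf hclosed hopen hU'o
    hU'c.isPreconnected hx
  refine ⟨?_, ?_⟩
  · rintro _ ⟨x, hx, rfl⟩
    exact ⟨himg hx, image_frontier_connectedComponentIn_preimage hf hclosed hopen hU'o
      hU'c.isPreconnected hx⟩
  · obtain ⟨y, hy⟩ := hU'c.nonempty
    refine (encard_setOf_connectedComponentIn_le fun x hx => ?_).trans (hfin y)
    obtain ⟨a, ha, hay⟩ : y ∈ f '' connectedComponentIn (f ⁻¹' U') x := (himg hx).symm ▸ hy
    exact ⟨a, ha, hay⟩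

/-- **Topological properties of finite open maps (Proposition 2.6 (i),(ii)).** Let `X`,
`X′` be compact Hausdorff spaces such that every point of `X` has a basis of connected
open neighborhoods, and let `f : X → X′` be continuous, open, surjective and finite of
topological degree at most `d`. Then: (i) the image of a connected open set `U` is a
connected open set with `∂f(U) ⊆ f(∂U)`; (ii) if `U′` is connected open and `U` is a
connected component of `f⁻¹(U′)`, then `f(U) = U′` and `f(∂U) = ∂U′`, and `f⁻¹(U′)`
has at most `d` connected components. -/
theorem finite_open_map_properties {X X' : Type*}
    [TopologicalSpace X] [TopologicalSpace X']
    [CompactSpace X] [T2Space X] [CompactSpace X'] [T2Space X']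
    (hloc : ∀ (x : X) (U : Set X), IsOpen U → x ∈ U →
      ∃ V : Set X, IsOpen V ∧ IsConnected V ∧ x ∈ V ∧ V ⊆ U)
    (f : X → X') (hf : Continuous f) (hopen : IsOpenMap f)
    (hsurj : Function.Surjective f) (d : ℕ)
    (hfin : ∀ x' : X', (f ⁻¹' {x'}).encard ≤ (d : ℕ∞)) :
    (∀ U : Set X, IsOpen U → IsConnected U →
      IsOpen (f '' U) ∧ IsConnected (f '' U) ∧ frontier (f '' U) ⊆ f '' frontier U) ∧
    (∀ U' : Set X', IsOpen U' → IsConnected U' →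
      (∀ U : Set X, (∃ x ∈ f ⁻¹' U', U = connectedComponentIn (f ⁻¹' U') x) →
        f '' U = U' ∧ f '' frontier U = frontier U') ∧
      {C : Set X | ∃ x ∈ f ⁻¹' U', C = connectedComponentIn (f ⁻¹' U') x}.encard
        ≤ (d : ℕ∞)) :=
  finite_open_map_properties_general hloc f hf hopen d hfin
end

section
/- Let X and X′ be compact Hausdorff topological spaces such that every point of X admits a basis of connected open neighborhoods, and let f : X → X′ be a continuous, open, surjective map that is finite of topological degree at most d (every point of X′ has at most d preimages). If U ⊆ X is a connected open set and U′ = f(U), then U is a connected component of f⁻¹(U′) if and only if f(∂U) ⊆ ∂U′. -/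
/-- **Topological properties of finite open maps (Proposition 2.6 (iii)).** Let `X`,
`X′` be compact Hausdorff spaces such that every point of `X` has a basis of connected
open neighborhoods, and let `f : X → X′` be continuous, open, surjective and finite of
topological degree at most `d`. If `U ⊆ X` is connected open and `U′ = f(U)`, then `U`
is a connected component of `f⁻¹(U′)` if and only if `f(∂U) ⊆ ∂U′`. -/
theorem component_iff_frontier_condition {X X' : Type*}
    [TopologicalSpace X] [TopologicalSpace X']
    [CompactSpace X] [T2Space X] [CompactSpace X'] [T2Space X']
    (hloc : ∀ (x : X) (U : Set X), IsOpen U → x ∈ U →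
      ∃ V : Set X, IsOpen V ∧ IsConnected V ∧ x ∈ V ∧ V ⊆ U)
    (f : X → X') (hf : Continuous f) (hopen : IsOpenMap f)
    (hsurj : Function.Surjective f) (d : ℕ)
    (hfin : ∀ x' : X', (f ⁻¹' {x'}).encard ≤ (d : ℕ∞))
    (U : Set X) (hU : IsOpen U) (hUconn : IsConnected U) :
    (∃ x ∈ U, U = connectedComponentIn (f ⁻¹' (f '' U)) x) ↔
      f '' frontier U ⊆ frontier (f '' U) := by
  have hU'open : IsOpen (f '' U) := hopen U hU
  have hWopen : IsOpen (f ⁻¹' (f '' U)) := hU'open.preimage hf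
  have hUW : U ⊆ f ⁻¹' (f '' U) := Set.subset_preimage_image f U
  rw [hU.frontier_eq, hU'open.frontier_eq]
  constructor
  · rintro ⟨x, hxU, hcomp⟩ _ ⟨y, ⟨hycl, hynU⟩, rfl⟩
    refine ⟨image_closure_subset_closure_image hf ⟨y, hycl, rfl⟩, ?_⟩
    intro hfy
    have hyW : y ∈ f ⁻¹' (f '' U) := hfy
    obtain ⟨V, hVopen, hVconn, hyV, hVW⟩ := hloc y _ hWopen hyW
    obtain ⟨z, hzV, hzU⟩ := mem_closure_iff.mp hycl V hVopen hyV
    have hUV : IsPreconnected (U ∪ V) :=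
      hUconn.isPreconnected.union z hzU hzV hVconn.isPreconnected
    have hsub : U ∪ V ⊆ connectedComponentIn (f ⁻¹' (f '' U)) x :=
      hUV.subset_connectedComponentIn (Or.inl hxU) (Set.union_subset hUW hVW)
    have : y ∈ U := by rw [hcomp]; exact hsub (Or.inr hyV)
    exact hynU this
  · intro hfr
    obtain ⟨x, hxU⟩ := hUconn.nonempty
    have hclW : closure U ∩ f ⁻¹' (f '' U) ⊆ U := by
      rintro y ⟨hycl, hyW⟩
      by_contra hynU
      exact (hfr ⟨y, ⟨hycl, hynU⟩, rfl⟩).2 hyW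
    refine ⟨x, hxU, Set.Subset.antisymm
      (hUconn.isPreconnected.subset_connectedComponentIn hxU hUW) ?_⟩
    set C := connectedComponentIn (f ⁻¹' (f '' U)) x with hC
    have hCW : C ⊆ f ⁻¹' (f '' U) := connectedComponentIn_subset _ _
    have hCpre : IsPreconnected C := isPreconnected_connectedComponentIn
    have hxC : x ∈ C := mem_connectedComponentIn (hUW hxU)
    have hcover : C ⊆ U ∪ (f ⁻¹' (f '' U) \ closure U) := by
      intro y hy
      by_cases h : y ∈ closure U
      · exact Or.inl (hclW ⟨h, hCW hy⟩)
      · exact Or.inr ⟨hCW hy, h⟩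
    have hopen2 : IsOpen (f ⁻¹' (f '' U) \ closure U) := hWopen.sdiff isClosed_closure
    rcases Set.eq_empty_or_nonempty (C \ U) with hemp | ⟨y, hyC, hynU⟩
    · exact Set.diff_eq_empty.mp hemp
    · exfalso
      have hynCl : y ∉ closure U := fun h => hynU (hclW ⟨h, hCW hyC⟩)
      obtain ⟨z, hzC, hzU, _, hzn⟩ :=
        hCpre U _ hU hopen2 hcover ⟨x, hxC, hxU⟩ ⟨y, hyC, hCW hyC, hynCl⟩
      exact hzn (subset_closure hzU)
end
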